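/- arXiv:2503.09234 — 4 statements merged into one kernel-verified Lean document; each statement's English description precedes it below -/
import Mathlib

section
/- Let n ≥ 5 be an integer, let Ω ⊆ ℝⁿ \ {0} be an open set, let Ω* = {x/|x|² : x ∈ Ω} be its image under inversion, and let u be a C⁴ function on Ω*. Define the Kelvin transform K(u)(x) = |x|^{4−n} u(x/|x|²) for x ∈ Ω. Then for every x ∈ Ω, Δ²(K(u))(x) = |x|^{−n−4} (Δ²u)(x/|x|²); equivalently, Δ²(K(u))(x) = |x|^{−8} K(Δ²u)(x). -/
/-!
Write `K_p v (x) = ‖x‖^p v(x/‖x‖²)`, so that the Kelvin transform is `K_{4-n}`, and let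
`E v (z) = Dv(z) z` be the Euler operator. Differentiating `K_p v` twice, using that the
derivative of the inversion at `x` is `‖x‖⁻²` times a reflection, gives the conjugation rule
  `Δ (K_p v) = K_{p-2} ((p + n - 2) (p v - 2 E v)) + K_{p-4} (Δ v)`.
Apply it to `K_{4-n} u`, then to the two resulting terms, of weights `2 - n` (where the first
term vanishes: the classical Kelvin transform of harmonic functions) and `-n`. The commutator
identity `Δ E = E Δ + 2 Δ` makes the two contributions of weight `-n - 2` cancel, leaving
`Δ² K_{4-n} u = K_{-n-4} Δ² u`.
-/

open scoped BigOperators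

/-- The Euclidean Laplacian on `ℝⁿ`: the sum of the second partial derivatives. -/
noncomputable def Lap {n : ℕ} (u : EuclideanSpace ℝ (Fin n) → ℝ) :
    EuclideanSpace ℝ (Fin n) → ℝ := fun x =>
  ∑ i : Fin n,
    fderiv ℝ (fun y => fderiv ℝ u y (EuclideanSpace.single i 1)) x (EuclideanSpace.single i 1)

/-- The bilaplacian `Δ² = Δ ∘ Δ`. -/
noncomputable def BiLap {n : ℕ} (u : EuclideanSpace ℝ (Fin n) → ℝ) :
    EuclideanSpace ℝ (Fin n) → ℝ := Lap (Lap u)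

/-- The Kelvin transform `K(f)(y) = |y|^{4−n} f(y/|y|²)`. -/
noncomputable def Kelvin {n : ℕ} (f : EuclideanSpace ℝ (Fin n) → ℝ) :
    EuclideanSpace ℝ (Fin n) → ℝ :=
  fun y => ‖y‖ ^ ((4 : ℝ) - n) * f ((‖y‖ ^ 2)⁻¹ • y)

open EuclideanGeometry
open scoped RealInnerProductSpace Topology

noncomputable section

variable {n : ℕ}

local notation "ℝⁿ" => EuclideanSpace ℝ (Fin n)

theorem sum_mul_apply_single (L : ℝⁿ →L[ℝ] ℝ) (x : ℝⁿ) :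
    ∑ i, x i * L (EuclideanSpace.single i 1) = L x := by
  conv_rhs => rw [← (EuclideanSpace.basisFun (Fin n) ℝ).sum_repr x]
  simp [map_sum]

theorem sum_mul_self_eq_norm_sq (x : ℝⁿ) : ∑ i, x i * x i = ‖x‖ ^ 2 := by
  rw [EuclideanSpace.real_norm_sq_eq]
  simp only [sq]

def partialDeriv (i : Fin n) (f : ℝⁿ → ℝ) : ℝⁿ → ℝ :=
  fun x => fderiv ℝ f x (EuclideanSpace.single i 1)

theorem Lap_eq_sum_partialDeriv (f : ℝⁿ → ℝ) (x : ℝⁿ) :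
    Lap f x = ∑ i, partialDeriv i (partialDeriv i f) x := rfl

theorem HasFDerivAt.partialDeriv_eq {f : ℝⁿ → ℝ} {L : ℝⁿ →L[ℝ] ℝ} {x : ℝⁿ}
    (h : HasFDerivAt f L x) (i : Fin n) : partialDeriv i f x = L (EuclideanSpace.single i 1) := by
  rw [partialDeriv, h.fderiv]

theorem Filter.EventuallyEq.partialDeriv_eq {f g : ℝⁿ → ℝ} {x : ℝⁿ} (h : f =ᶠ[𝓝 x] g)
    (i : Fin n) : partialDeriv i f x = partialDeriv i g x := by
  rw [partialDeriv, partialDeriv, h.fderiv_eq]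

theorem Filter.EventuallyEq.Lap_eq {f g : ℝⁿ → ℝ} {x : ℝⁿ} (h : f =ᶠ[𝓝 x] g) :
    Lap f x = Lap g x := by
  refine Finset.sum_congr rfl fun i _ => Filter.EventuallyEq.partialDeriv_eq ?_ i
  filter_upwards [h.fderiv (𝕜 := ℝ)] with y hy
  simp only [hy]

theorem ContDiffOn.partialDeriv {f : ℝⁿ → ℝ} {U : Set ℝⁿ} {m : WithTop ℕ∞}
    (hf : ContDiffOn ℝ (m + 1) f U) (hU : IsOpen U) (i : Fin n) :
    ContDiffOn ℝ m (_root_.partialDeriv i f) U :=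
  (hf.fderiv_of_isOpen hU le_rfl).clm_apply contDiffOn_const

theorem ContDiffOn.Lap {f : ℝⁿ → ℝ} {U : Set ℝⁿ} {m : WithTop ℕ∞}
    (hf : ContDiffOn ℝ (m + 2) f U) (hU : IsOpen U) : ContDiffOn ℝ m (_root_.Lap f) U := by
  have hf' : ContDiffOn ℝ (m + 1 + 1) f U := by rwa [add_assoc, one_add_one_eq_two]
  exact ContDiffOn.sum fun i _ => (hf'.partialDeriv hU i).partialDeriv hU i

theorem ContDiffOn.differentiableAt_of_isOpen {f : ℝⁿ → ℝ} {U : Set ℝⁿ} {m : WithTop ℕ∞}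
    (hf : ContDiffOn ℝ m f U) (hU : IsOpen U) (hm : m ≠ 0) {x : ℝⁿ} (hx : x ∈ U) :
    DifferentiableAt ℝ f x :=
  (hf.contDiffAt (hU.mem_nhds hx)).differentiableAt hm

theorem partialDeriv_add {f g : ℝⁿ → ℝ} {x : ℝⁿ} (hf : DifferentiableAt ℝ f x)
    (hg : DifferentiableAt ℝ g x) (i : Fin n) :
    partialDeriv i (fun y => f y + g y) x = partialDeriv i f x + partialDeriv i g x :=
  (hf.hasFDerivAt.add hg.hasFDerivAt).partialDeriv_eq i

theorem partialDeriv_const_mul {f : ℝⁿ → ℝ} {x : ℝⁿ} (hf : DifferentiableAt ℝ f x) (c : ℝ)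
    (i : Fin n) : partialDeriv i (fun y => c * f y) x = c * partialDeriv i f x :=
  (hf.hasFDerivAt.const_mul c).partialDeriv_eq i

theorem partialDeriv_sum {ι : Type*} (s : Finset ι) {f : ι → ℝⁿ → ℝ} {x : ℝⁿ}
    (hf : ∀ j ∈ s, DifferentiableAt ℝ (f j) x) (i : Fin n) :
    partialDeriv i (fun y => ∑ j ∈ s, f j y) x = ∑ j ∈ s, partialDeriv i (f j) x := by
  rw [(HasFDerivAt.fun_sum fun j hj => (hf j hj).hasFDerivAt).partialDeriv_eq i,
    _root_.sum_apply]
  rfl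

theorem hasFDerivAt_coord_mul {g : ℝⁿ → ℝ} {L : ℝⁿ →L[ℝ] ℝ} {x : ℝⁿ} (hg : HasFDerivAt g L x)
    (j : Fin n) :
    HasFDerivAt (fun y : ℝⁿ => y j * g y) (x j • L + g x • EuclideanSpace.proj j) x :=
  (EuclideanSpace.proj j).hasFDerivAt.mul hg

theorem partialDeriv_coord_mul {g : ℝⁿ → ℝ} {x : ℝⁿ} (hg : DifferentiableAt ℝ g x)
    (i j : Fin n) :
    partialDeriv i (fun y => y j * g y) x =
      (if i = j then g x else 0) + x j * partialDeriv i g x := by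
  refine ((hasFDerivAt_coord_mul hg.hasFDerivAt j).partialDeriv_eq i).trans ?_
  by_cases h : i = j <;> simp [h, partialDeriv, Ne.symm, add_comm]

theorem partialDeriv_comm {f : ℝⁿ → ℝ} {U : Set ℝⁿ} (hf : ContDiffOn ℝ 2 f U) (hU : IsOpen U)
    {x : ℝⁿ} (hx : x ∈ U) (i j : Fin n) :
    partialDeriv i (partialDeriv j f) x = partialDeriv j (partialDeriv i f) x := by
  have hf' : ContDiffAt ℝ 2 f x := hf.contDiffAt (hU.mem_nhds hx)
  have hdf : DifferentiableAt ℝ (fderiv ℝ f) x :=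
    (hf'.fderiv_right (m := 1) le_rfl).differentiableAt one_ne_zero
  have hsecond : ∀ k l : Fin n, partialDeriv k (partialDeriv l f) x =
      fderiv ℝ (fderiv ℝ f) x (EuclideanSpace.single k 1) (EuclideanSpace.single l 1) := by
    intro k l
    exact ((hdf.hasFDerivAt.clm_apply (hasFDerivAt_const _ x)).partialDeriv_eq k).trans (by simp)
  rw [hsecond, hsecond]
  exact hf'.isSymmSndFDerivAt (by simp) _ _

theorem Lap_add {f g : ℝⁿ → ℝ} {U : Set ℝⁿ} {x : ℝⁿ} (hf : ContDiffOn ℝ 2 f U)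
    (hg : ContDiffOn ℝ 2 g U) (hU : IsOpen U) (hx : x ∈ U) :
    Lap (fun y => f y + g y) x = Lap f x + Lap g x := by
  simp only [Lap_eq_sum_partialDeriv, ← Finset.sum_add_distrib]
  refine Finset.sum_congr rfl fun i _ => ?_
  have hfirst : partialDeriv i (fun y => f y + g y) =ᶠ[𝓝 x]
      fun y => partialDeriv i f y + partialDeriv i g y := by
    filter_upwards [hU.mem_nhds hx] with y hy
    exact partialDeriv_add (hf.differentiableAt_of_isOpen hU two_ne_zero hy)
      (hg.differentiableAt_of_isOpen hU two_ne_zero hy) i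
  rw [hfirst.partialDeriv_eq i]
  exact partialDeriv_add ((hf.partialDeriv hU i).differentiableAt_of_isOpen hU one_ne_zero hx)
    ((hg.partialDeriv hU i).differentiableAt_of_isOpen hU one_ne_zero hx) i

theorem Lap_const_mul {f : ℝⁿ → ℝ} {U : Set ℝⁿ} {x : ℝⁿ} (hf : ContDiffOn ℝ 2 f U)
    (hU : IsOpen U) (hx : x ∈ U) (c : ℝ) : Lap (fun y => c * f y) x = c * Lap f x := by
  simp only [Lap_eq_sum_partialDeriv, Finset.mul_sum]
  refine Finset.sum_congr rfl fun i _ => ?_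
  have hfirst : partialDeriv i (fun y => c * f y) =ᶠ[𝓝 x] fun y => c * partialDeriv i f y := by
    filter_upwards [hU.mem_nhds hx] with y hy
    exact partialDeriv_const_mul (hf.differentiableAt_of_isOpen hU two_ne_zero hy) c i
  rw [hfirst.partialDeriv_eq i]
  exact partialDeriv_const_mul
    ((hf.partialDeriv hU i).differentiableAt_of_isOpen hU one_ne_zero hx) c i

theorem Lap_sum {ι : Type*} (s : Finset ι) {f : ι → ℝⁿ → ℝ} {U : Set ℝⁿ} {x : ℝⁿ}
    (hf : ∀ j ∈ s, ContDiffOn ℝ 2 (f j) U) (hU : IsOpen U) (hx : x ∈ U) :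
    Lap (fun y => ∑ j ∈ s, f j y) x = ∑ j ∈ s, Lap (f j) x := by
  simp only [Lap_eq_sum_partialDeriv]
  rw [Finset.sum_comm]
  refine Finset.sum_congr rfl fun i _ => ?_
  have hfirst : partialDeriv i (fun y => ∑ j ∈ s, f j y) =ᶠ[𝓝 x]
      fun y => ∑ j ∈ s, partialDeriv i (f j) y := by
    filter_upwards [hU.mem_nhds hx] with y hy
    exact partialDeriv_sum s (fun j hj => (hf j hj).differentiableAt_of_isOpen hU two_ne_zero hy) i
  rw [hfirst.partialDeriv_eq i]
  exact partialDeriv_sum s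
    (fun j hj => ((hf j hj).partialDeriv hU i).differentiableAt_of_isOpen hU one_ne_zero hx) i

theorem Lap_coord_mul {g : ℝⁿ → ℝ} {U : Set ℝⁿ} {x : ℝⁿ} (hg : ContDiffOn ℝ 2 g U)
    (hU : IsOpen U) (hx : x ∈ U) (j : Fin n) :
    Lap (fun y => y j * g y) x = x j * Lap g x + 2 * partialDeriv j g x := by
  have hsecond : ∀ i, partialDeriv i (partialDeriv i (fun y => y j * g y)) x =
      (if i = j then 2 * partialDeriv i g x else 0) +
        x j * partialDeriv i (partialDeriv i g) x := by
    intro i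
    have hfirst : partialDeriv i (fun y => y j * g y) =ᶠ[𝓝 x]
        fun y => (if i = j then g y else 0) + y j * partialDeriv i g y := by
      filter_upwards [hU.mem_nhds hx] with y hy
      exact partialDeriv_coord_mul (hg.differentiableAt_of_isOpen hU two_ne_zero hy) i j
    have hg' := hg.differentiableAt_of_isOpen hU two_ne_zero hx
    have hdg := (hg.partialDeriv hU i).differentiableAt_of_isOpen hU one_ne_zero hx
    rw [hfirst.partialDeriv_eq i]
    by_cases h : i = j
    · subst h
      simp only [if_true]
      rw [partialDeriv_add (g := fun y => y i * partialDeriv i g y) hg'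
          ((EuclideanSpace.proj i).differentiableAt.fun_mul hdg),
        partialDeriv_coord_mul hdg, if_pos rfl]
      ring
    · simp only [h, if_false, zero_add]
      rw [partialDeriv_coord_mul hdg, if_neg h, zero_add]
  rw [Lap_eq_sum_partialDeriv, Finset.sum_congr rfl fun i _ => hsecond i, Lap_eq_sum_partialDeriv]
  simp [Finset.sum_add_distrib, Finset.mul_sum, add_comm]

theorem Lap_sub {f g : ℝⁿ → ℝ} {U : Set ℝⁿ} {x : ℝⁿ} (hf : ContDiffOn ℝ 2 f U)
    (hg : ContDiffOn ℝ 2 g U) (hU : IsOpen U) (hx : x ∈ U) :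
    Lap (fun y => f y - g y) x = Lap f x - Lap g x := by
  rw [show (fun y => f y - g y) = fun y => f y + -1 * g y by funext y; ring,
    Lap_add hf (contDiffOn_const.mul hg) hU hx, Lap_const_mul hg hU hx]
  ring

theorem Lap_partialDeriv_comm {f : ℝⁿ → ℝ} {U : Set ℝⁿ} {x : ℝⁿ} (hf : ContDiffOn ℝ 3 f U)
    (hU : IsOpen U) (hx : x ∈ U) (j : Fin n) :
    Lap (partialDeriv j f) x = partialDeriv j (Lap f) x := by
  have hcomm : ∀ i, partialDeriv i (partialDeriv i (partialDeriv j f)) x =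
      partialDeriv j (partialDeriv i (partialDeriv i f)) x := by
    intro i
    have h : partialDeriv i (partialDeriv j f) =ᶠ[𝓝 x] partialDeriv j (partialDeriv i f) := by
      filter_upwards [hU.mem_nhds hx] with y hy
      exact partialDeriv_comm (hf.of_le (by norm_num)) hU hy i j
    rw [h.partialDeriv_eq i]
    exact partialDeriv_comm (hf.partialDeriv hU i) hU hx i j
  rw [Lap_eq_sum_partialDeriv, Finset.sum_congr rfl fun i _ => hcomm i]
  exact (partialDeriv_sum Finset.univ (fun i _ =>
    ((hf.partialDeriv hU i).partialDeriv hU i).differentiableAt_of_isOpen hU one_ne_zero hx) j).symm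

def euler (f : ℝⁿ → ℝ) : ℝⁿ → ℝ := fun x => fderiv ℝ f x x

theorem HasFDerivAt.euler_eq {f : ℝⁿ → ℝ} {L : ℝⁿ →L[ℝ] ℝ} {x : ℝⁿ} (h : HasFDerivAt f L x) :
    euler f x = L x := by
  rw [euler, h.fderiv]

theorem euler_eq_sum (f : ℝⁿ → ℝ) (x : ℝⁿ) : euler f x = ∑ j, x j * partialDeriv j f x :=
  (sum_mul_apply_single _ x).symm

theorem ContDiffOn.euler {f : ℝⁿ → ℝ} {U : Set ℝⁿ} {m : WithTop ℕ∞}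
    (hf : ContDiffOn ℝ (m + 1) f U) (hU : IsOpen U) : ContDiffOn ℝ m (_root_.euler f) U :=
  (hf.fderiv_of_isOpen hU le_rfl).clm_apply contDiffOn_id

theorem euler_coord_mul {g : ℝⁿ → ℝ} {x : ℝⁿ} (hg : DifferentiableAt ℝ g x) (j : Fin n) :
    euler (fun y => y j * g y) x = x j * g x + x j * euler g x := by
  rw [(hasFDerivAt_coord_mul hg.hasFDerivAt j).euler_eq]
  simp [euler]
  ring

theorem euler_euler {f : ℝⁿ → ℝ} {U : Set ℝⁿ} {x : ℝⁿ} (hf : ContDiffOn ℝ 2 f U) (hU : IsOpen U)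
    (hx : x ∈ U) : euler (euler f) x = euler f x + ∑ j, x j * euler (partialDeriv j f) x := by
  have hdiff : ∀ j, DifferentiableAt ℝ (partialDeriv j f) x := fun j =>
    (hf.partialDeriv hU j).differentiableAt_of_isOpen hU one_ne_zero hx
  have hsum : HasFDerivAt (euler f) (∑ j, (x j • fderiv ℝ (partialDeriv j f) x +
      partialDeriv j f x • EuclideanSpace.proj j)) x := by
    rw [show euler f = fun y => ∑ j, y j * partialDeriv j f y from funext (euler_eq_sum f)]
    exact HasFDerivAt.fun_sum fun j _ => hasFDerivAt_coord_mul (hdiff j).hasFDerivAt j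
  rw [hsum.euler_eq, euler_eq_sum f x]
  simp [sum_apply, Finset.sum_add_distrib, euler, mul_comm, add_comm]

theorem Lap_euler {f : ℝⁿ → ℝ} {U : Set ℝⁿ} {x : ℝⁿ} (hf : ContDiffOn ℝ 3 f U) (hU : IsOpen U)
    (hx : x ∈ U) : Lap (euler f) x = euler (Lap f) x + 2 * Lap f x := by
  have hcoord : ∀ j ∈ Finset.univ, ContDiffOn ℝ 2 (fun y => y j * partialDeriv j f y) U :=
    fun j _ => (EuclideanSpace.proj j).contDiff.contDiffOn.mul (hf.partialDeriv hU j)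
  rw [show euler f = fun y => ∑ j, y j * partialDeriv j f y from funext (euler_eq_sum f),
    Lap_sum Finset.univ hcoord hU hx]
  simp only [Lap_coord_mul (hf.partialDeriv hU _) hU hx, Lap_partialDeriv_comm hf hU hx,
    Finset.sum_add_distrib, ← Finset.mul_sum, ← euler_eq_sum, ← Lap_eq_sum_partialDeriv]

section InnerProductSpace

variable {F : Type*} [NormedAddCommGroup F] [InnerProductSpace ℝ F]

theorem inversion_zero_one_apply (x : F) : inversion (0 : F) 1 x = (‖x‖ ^ 2)⁻¹ • x := by
  simp [inversion]

theorem norm_inversion_zero_one (x : F) : ‖inversion (0 : F) 1 x‖ = ‖x‖⁻¹ := by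
  simpa using dist_inversion_center (0 : F) x 1

theorem ne_zero_of_inversion_zero_one_mem {U : Set F} (hU0 : (0 : F) ∉ U) {x : F}
    (hx : inversion 0 1 x ∈ U) : x ≠ 0 := by
  rintro rfl
  exact hU0 (by simpa using hx)

theorem fderiv_inversion_zero_one_apply {x : F} (hx : x ≠ 0) (h : F) :
    fderiv ℝ (inversion (0 : F) 1) x h = (‖x‖ ^ 2)⁻¹ • (h - (2 * ⟪x, h⟫ / ‖x‖ ^ 2) • x) := by
  rw [(hasFDerivAt_inversion (R := 1) hx).fderiv]
  simp [Submodule.reflection_orthogonal_apply, Submodule.reflection_singleton_apply]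
  module

theorem hasFDerivAt_norm_rpow_of_ne_zero (p : ℝ) {x : F} (hx : x ≠ 0) :
    HasFDerivAt (fun y : F => ‖y‖ ^ p) ((p * ‖x‖ ^ (p - 2)) • innerSL ℝ x) x := by
  have hsq : (fun y : F => ‖y‖ ^ p) = fun y => (‖y‖ ^ 2) ^ (p / 2) := by
    funext y
    rw [← Real.rpow_natCast, ← Real.rpow_mul (norm_nonneg y)]
    ring_nf
  rw [hsq]
  convert (hasStrictFDerivAt_norm_sq x).hasFDerivAt.rpow_const (p := p / 2)
    (Or.inl (by positivity)) using 1
  rw [← Real.rpow_natCast, ← Real.rpow_mul (norm_nonneg x)]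
  ext h
  simp [show 2 * (p / 2 - 1) = p - 2 by ring]
  ring

def kelvin (p : ℝ) (v : F → ℝ) : F → ℝ := fun x => ‖x‖ ^ p * v (inversion 0 1 x)

theorem isOpen_preimage_inversion_zero_one {U : Set F} (hU : IsOpen U) (hU0 : (0 : F) ∉ U) :
    IsOpen (inversion (0 : F) 1 ⁻¹' U) := by
  have hcont : ContinuousOn (inversion (0 : F) 1) {0}ᶜ := fun x hx =>
    (hasFDerivAt_inversion hx).continuousAt.continuousWithinAt
  convert hcont.isOpen_inter_preimage isOpen_compl_singleton hU using 1
  ext x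
  simp only [Set.mem_preimage, Set.mem_inter_iff, Set.mem_compl_singleton_iff, iff_and_self]
  exact ne_zero_of_inversion_zero_one_mem hU0

theorem ContDiffOn.kelvin {v : F → ℝ} {U : Set F} {m : ℕ} (hv : ContDiffOn ℝ m v U)
    (hU0 : (0 : F) ∉ U) (p : ℝ) :
    ContDiffOn ℝ m (_root_.kelvin p v) (inversion (0 : F) 1 ⁻¹' U) := by
  intro x hx
  have hx0 := ne_zero_of_inversion_zero_one_mem hU0 hx
  have hinv : ContDiffAt ℝ m (inversion (0 : F) 1) x :=
    contDiffAt_const.inversion contDiffAt_const contDiffAt_id hx0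
  exact ((contDiffAt_norm ℝ hx0).rpow_const_of_ne (norm_ne_zero_iff.2 hx0)).contDiffWithinAt.mul
    ((hv _ hx).comp x hinv.contDiffWithinAt fun y hy => hy)

theorem DifferentiableAt.kelvin {v : F → ℝ} {x : F} (hv : DifferentiableAt ℝ v (inversion 0 1 x))
    (hx : x ≠ 0) (p : ℝ) : DifferentiableAt ℝ (_root_.kelvin p v) x :=
  (hasFDerivAt_norm_rpow_of_ne_zero p hx).differentiableAt.mul
    (hv.comp x (hasFDerivAt_inversion hx).differentiableAt)

end InnerProductSpace

theorem norm_rpow_sub_two {x : ℝⁿ} (hx : x ≠ 0) (p : ℝ) :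
    ‖x‖ ^ (p - 2) = ‖x‖ ^ p * (‖x‖ ^ 2)⁻¹ := by
  rw [Real.rpow_sub (norm_pos_iff.2 hx), Real.rpow_two, div_eq_mul_inv]

theorem partialDeriv_kelvin {v : ℝⁿ → ℝ} {x : ℝⁿ} (hv : DifferentiableAt ℝ v (inversion 0 1 x))
    (hx : x ≠ 0) (p : ℝ) (i : Fin n) :
    partialDeriv i (kelvin p v) x =
      kelvin p (fun z => z i * (p * v z - 2 * euler v z)) x +
        kelvin (p - 2) (partialDeriv i v) x := by
  refine (HasFDerivAt.partialDeriv_eq (f := kelvin p v) ((hasFDerivAt_norm_rpow_of_ne_zero p hx).mul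
    (hv.hasFDerivAt.comp x (hasFDerivAt_inversion hx).differentiableAt.hasFDerivAt)) i).trans ?_
  simp only [kelvin, euler, partialDeriv]
  simp [fderiv_inversion_zero_one_apply hx, inversion_zero_one_apply,
    EuclideanSpace.inner_single_right, norm_rpow_sub_two hx]
  ring

theorem Lap_kelvin {v : ℝⁿ → ℝ} {U : Set ℝⁿ} (hv : ContDiffOn ℝ 2 v U) (hU : IsOpen U)
    (hU0 : 0 ∉ U) {x : ℝⁿ} (hx : inversion 0 1 x ∈ U) (p : ℝ) :
    Lap (kelvin p v) x = kelvin (p - 2) (fun z => (p + n - 2) * (p * v z - 2 * euler v z)) x +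
      kelvin (p - 4) (Lap v) x := by
  have hx0 := ne_zero_of_inversion_zero_one_mem hU0 hx
  set z := inversion 0 1 x with hz
  set g : ℝⁿ → ℝ := fun y => p * v y - 2 * euler v y with hg
  have hvz : DifferentiableAt ℝ v z := hv.differentiableAt_of_isOpen hU two_ne_zero hx
  have hEvz : DifferentiableAt ℝ (euler v) z :=
    (hv.euler hU).differentiableAt_of_isOpen hU one_ne_zero hx
  have hgz : DifferentiableAt ℝ g z := (hvz.const_mul p).sub (hEvz.const_mul 2)
  have hdvz : ∀ i, DifferentiableAt ℝ (partialDeriv i v) z := fun i =>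
    (hv.partialDeriv hU i).differentiableAt_of_isOpen hU one_ne_zero hx
  have hEg : euler g z = p * euler v z - 2 * euler (euler v) z := by
    rw [HasFDerivAt.euler_eq (f := g) ((hvz.hasFDerivAt.const_mul p).sub
      (hEvz.hasFDerivAt.const_mul 2))]
    simp [euler]
  have hsecond : ∀ i, partialDeriv i (partialDeriv i (kelvin p v)) x =
      (‖x‖ ^ p * ((p - 2) * g z - 2 * euler g z)) * (z i * z i) +
        ‖x‖ ^ (p - 2) * (z i * partialDeriv i g z) +
        ((p - 2) * ‖x‖ ^ (p - 2)) * (z i * partialDeriv i v z) +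
        (-2 * ‖x‖ ^ (p - 2)) * (z i * euler (partialDeriv i v) z) +
        ‖x‖ ^ (p - 4) * partialDeriv i (partialDeriv i v) z + ‖x‖ ^ (p - 2) * g z := by
    intro i
    have hfirst : partialDeriv i (kelvin p v) =ᶠ[𝓝 x]
        fun y => kelvin p (fun z => z i * g z) y + kelvin (p - 2) (partialDeriv i v) y := by
      filter_upwards [(isOpen_preimage_inversion_zero_one hU hU0).mem_nhds hx] with y hy
      exact partialDeriv_kelvin (hv.differentiableAt_of_isOpen hU two_ne_zero hy)
        (ne_zero_of_inversion_zero_one_mem hU0 hy) p i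
    have hwz : DifferentiableAt ℝ (fun z : ℝⁿ => z i * g z) z :=
      (EuclideanSpace.proj i).differentiableAt.fun_mul hgz
    rw [hfirst.partialDeriv_eq i, partialDeriv_add (hwz.kelvin hx0 p) ((hdvz i).kelvin hx0 _),
      partialDeriv_kelvin hwz hx0, partialDeriv_kelvin (hdvz i) hx0]
    simp only [kelvin, ← hz, euler_coord_mul hgz, partialDeriv_coord_mul hgz, if_true]
    rw [show p - 2 - 2 = p - 4 by ring]
    ring
  have hsum_Edv : ∑ i, z i * euler (partialDeriv i v) z = euler (euler v) z - euler v z := by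
    rw [euler_euler hv hU hx]
    ring
  rw [Lap_eq_sum_partialDeriv, Finset.sum_congr rfl fun i _ => hsecond i]
  simp only [Finset.sum_add_distrib, ← Finset.mul_sum, Finset.sum_const, Finset.card_univ,
    Fintype.card_fin, nsmul_eq_mul]
  rw [sum_mul_self_eq_norm_sq, ← euler_eq_sum, ← euler_eq_sum, hsum_Edv, ← Lap_eq_sum_partialDeriv,
    hEg]
  have hnz : ‖z‖ = ‖x‖⁻¹ := norm_inversion_zero_one x
  simp only [kelvin, ← hz, hg, hnz, norm_rpow_sub_two hx0]
  field_simp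
  ring

theorem Kelvin_eq_kelvin (u : ℝⁿ → ℝ) : Kelvin u = kelvin (4 - n) u := by
  funext y
  simp [Kelvin, kelvin, inversion_zero_one_apply]

theorem BiLap_kelvin {u : ℝⁿ → ℝ} {U : Set ℝⁿ} (hu : ContDiffOn ℝ 4 u U) (hU : IsOpen U)
    (hU0 : 0 ∉ U) {x : ℝⁿ} (hx : inversion 0 1 x ∈ U) :
    BiLap (kelvin (4 - n) u) x = kelvin (-n - 4) (BiLap u) x := by
  have hV : IsOpen (inversion 0 1 ⁻¹' U) := isOpen_preimage_inversion_zero_one hU hU0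
  have hu2 : ContDiffOn ℝ 2 u U := hu.of_le (by norm_num)
  have hEu : ContDiffOn ℝ 2 (euler u) U := (hu.of_le (by norm_num) : ContDiffOn ℝ 3 u U).euler hU
  have hLu : ContDiffOn ℝ 2 (Lap u) U := hu.Lap hU
  set f : ℝⁿ → ℝ := fun z => (4 - n + n - 2) * ((4 - n) * u z - 2 * euler u z)
  have hg : ContDiffOn ℝ 2 (fun z => (4 - n) * u z - 2 * euler u z) U :=
    (contDiffOn_const.mul hu2).sub (contDiffOn_const.mul hEu)
  have hf : ContDiffOn ℝ 2 f U := contDiffOn_const.mul hg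
  have hLf : Lap f (inversion 0 1 x) =
      (4 - n + n - 2) * ((4 - n) * Lap u (inversion 0 1 x) -
        2 * (euler (Lap u) (inversion 0 1 x) + 2 * Lap u (inversion 0 1 x))) := by
    rw [Lap_const_mul hg hU hx, Lap_sub (contDiffOn_const.mul hu2) (contDiffOn_const.mul hEu) hU hx,
      Lap_const_mul hu2 hU hx, Lap_const_mul hEu hU hx, Lap_euler (hu.of_le (by norm_num)) hU hx]
  have hfirst : Lap (kelvin (4 - n) u) =ᶠ[𝓝 x]
      fun y => kelvin (4 - n - 2) f y + kelvin (4 - n - 4) (Lap u) y := by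
    filter_upwards [hV.mem_nhds hx] with y hy
    exact Lap_kelvin hu2 hU hU0 hy _
  rw [BiLap, hfirst.Lap_eq, Lap_add (hf.kelvin hU0 _) (hLu.kelvin hU0 _) hV hx,
    Lap_kelvin hf hU hU0 hx, Lap_kelvin hLu hU hU0 hx]
  simp only [kelvin, hLf, BiLap]
  rw [show (4 : ℝ) - n - 2 - 4 = -n - 2 by ring, show (4 : ℝ) - n - 4 - 2 = -n - 2 by ring,
    show (4 : ℝ) - n - 4 - 4 = -n - 4 by ring]
  ring

end

theorem stmt_2_general (n : ℕ) (Ω : Set (EuclideanSpace ℝ (Fin n)))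
    (hΩ : IsOpen Ω) (hΩ0 : (0 : EuclideanSpace ℝ (Fin n)) ∉ Ω)
    (u : EuclideanSpace ℝ (Fin n) → ℝ)
    (hu : ContDiffOn ℝ 4 u ((fun x : EuclideanSpace ℝ (Fin n) => (‖x‖ ^ 2)⁻¹ • x) '' Ω)) :
    ∀ x ∈ Ω,
      BiLap (Kelvin u) x = ‖x‖ ^ (-(n : ℝ) - 4) * BiLap u ((‖x‖ ^ 2)⁻¹ • x) ∧
      BiLap (Kelvin u) x = ‖x‖ ^ (-(8 : ℝ)) * Kelvin (BiLap u) x := by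
  intro x hx
  have hx0 : x ≠ 0 := fun h => hΩ0 (h ▸ hx)
  have hinv : Function.Involutive (inversion (0 : EuclideanSpace ℝ (Fin n)) 1) :=
    inversion_involutive 0 one_ne_zero
  have hΩ' : (fun x : EuclideanSpace ℝ (Fin n) => (‖x‖ ^ 2)⁻¹ • x) '' Ω = inversion 0 1 ⁻¹' Ω := by
    rw [← hinv.image_eq_preimage_symm]
    simp only [inversion_zero_one_apply]
  rw [hΩ'] at hu
  have hBi := BiLap_kelvin hu (isOpen_preimage_inversion_zero_one hΩ hΩ0) (by simpa using hΩ0)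
    (by simpa [hinv x] using hx)
  rw [← Kelvin_eq_kelvin] at hBi
  refine ⟨?_, ?_⟩
  · rw [hBi, kelvin, inversion_zero_one_apply]
  · rw [hBi, kelvin, Kelvin, ← mul_assoc, ← Real.rpow_add (norm_pos_iff.2 hx0),
      inversion_zero_one_apply]
    ring_nf

/-- the transformation law of the bilaplacian under the Kelvin transform:
`Δ²(K u)(x) = |x|^{−n−4} (Δ²u)(x/|x|²) = |x|^{−8} K(Δ²u)(x)` on an open set
`Ω ⊆ ℝⁿ \ {0}`, for `u` of class `C⁴` on the inverted set `Ω*`. -/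
theorem stmt_2 (n : ℕ) (hn : 5 ≤ n) (Ω : Set (EuclideanSpace ℝ (Fin n)))
    (hΩ : IsOpen Ω) (hΩ0 : (0 : EuclideanSpace ℝ (Fin n)) ∉ Ω)
    (u : EuclideanSpace ℝ (Fin n) → ℝ)
    (hu : ContDiffOn ℝ 4 u ((fun x : EuclideanSpace ℝ (Fin n) => (‖x‖ ^ 2)⁻¹ • x) '' Ω)) :
    ∀ x ∈ Ω,
      BiLap (Kelvin u) x = ‖x‖ ^ (-(n : ℝ) - 4) * BiLap u ((‖x‖ ^ 2)⁻¹ • x) ∧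
      BiLap (Kelvin u) x = ‖x‖ ^ (-(8 : ℝ)) * Kelvin (BiLap u) x :=
  stmt_2_general n Ω hΩ hΩ0 u hu
end

section
/- Let n ≥ 5 be an integer and let v : ℝ → (0,∞) be a C⁴ function. Define u : ℝⁿ \ {0} → (0,∞) by u(x) = |x|^{(4−n)/2} v(−log|x|). Then for every x ∈ ℝⁿ \ {0}, Δ²u(x) − (n(n−4)(n²−4)/16) u(x)^{(n+4)/(n−4)} = |x|^{−(n+4)/2} · [ v⁗(t) − ((n(n−4)+8)/2) v″(t) + (n²(n−4)²/16) v(t) − (n(n²−4)(n−4)/16) v(t)^{(n+4)/(n−4)} ] evaluated at t = −log|x|. -/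
open scoped BigOperators

/-! For a radial function, `Δ (F ‖y‖) = F'' + (n - 1) / r * F'` with `r = ‖y‖`. In the
Emden–Fowler variable `t = -log r` this turns `Δ (r ^ β * g t)` into
`r ^ (β - 2) * (g'' - (2β + n - 2) g' + β (β + n - 2) g) t`, an expression of the same shape.
Applying it with `β = (4 - n) / 2` and then with `β - 2` computes `Δ² u`; the nonlinear term
transforms with the same weight `r ^ (-(n + 4) / 2)` because `(4 - n) / 2 * (n + 4) / (n - 4)`
equals `-(n + 4) / 2`. -/

open Filter Topology

section InnerProductSpace

variable {E : Type*} [NormedAddCommGroup E] [InnerProductSpace ℝ E]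

theorem hasFDerivAt_norm_of_ne_zero {x : E} (hx : x ≠ 0) :
    HasFDerivAt (fun y : E => ‖y‖) (‖x‖⁻¹ • innerSL ℝ x) x := by
  have hr : 0 < ‖x‖ := norm_pos_iff.mpr hx
  have hsqrt : HasDerivAt Real.sqrt (1 / (2 * ‖x‖)) (‖x‖ ^ 2) := by
    simpa only [Real.sqrt_sq hr.le] using Real.hasDerivAt_sqrt (pow_pos hr 2).ne'
  have h := hsqrt.comp_hasFDerivAt x (hasStrictFDerivAt_norm_sq x).hasFDerivAt
  simp only [Function.comp_def, Real.sqrt_sq (norm_nonneg _)] at h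
  refine h.congr_fderiv ?_
  ext w
  simp only [smul_apply, nsmul_eq_mul, smul_eq_mul]
  field_simp
  norm_num

theorem HasDerivAt.hasFDerivAt_comp_norm {F : ℝ → ℝ} {F' : ℝ} {x : E} (hx : x ≠ 0)
    (hF : HasDerivAt F F' ‖x‖) :
    HasFDerivAt (fun y : E => F ‖y‖) ((F' / ‖x‖) • innerSL ℝ x) x := by
  have h := hF.comp_hasFDerivAt x (hasFDerivAt_norm_of_ne_zero hx)
  rwa [smul_smul, ← div_eq_mul_inv] at h

end InnerProductSpace

theorem hasDerivAt_rpow_mul_comp_neg_log (β : ℝ) {g : ℝ → ℝ} {g' r : ℝ} (hr : 0 < r)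
    (hg : HasDerivAt g g' (-Real.log r)) :
    HasDerivAt (fun s => s ^ β * g (-Real.log s))
      (r ^ (β - 1) * (β * g (-Real.log r) - g')) r := by
  have hpow := Real.hasDerivAt_rpow_const (p := β) (Or.inl hr.ne')
  have hcomp : HasDerivAt (fun s => g (-Real.log s)) (g' * -r⁻¹) r :=
    hg.comp r (Real.hasDerivAt_log hr.ne').neg
  refine (hpow.mul hcomp).congr_deriv ?_
  rw [Real.rpow_sub_one hr.ne']
  field_simp
  ring

theorem ContDiff.hasDerivAt_iteratedDeriv {f : ℝ → ℝ} {N : WithTop ℕ∞}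
    (hf : ContDiff ℝ N f) {k : ℕ} (hk : (k : WithTop ℕ∞) < N) (t : ℝ) :
    HasDerivAt (iteratedDeriv k f) (iteratedDeriv (k + 1) f t) t := by
  rw [iteratedDeriv_succ]
  exact (hf.differentiable_iteratedDeriv k hk t).hasDerivAt

/-- `g₀ g₁ g₂` stand for the values `g t, g' t, g'' t` of a function and its derivatives. -/
def emdenFowlerLap (n : ℕ) (β g₀ g₁ g₂ : ℝ) : ℝ :=
  g₂ - (2 * β + n - 2) * g₁ + β * (β + n - 2) * g₀

section Euclidean

variable {n : ℕ}

theorem Filter.EventuallyEq.lap_eq {f g : EuclideanSpace ℝ (Fin n) → ℝ}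
    {x : EuclideanSpace ℝ (Fin n)} (h : f =ᶠ[𝓝 x] g) : Lap f x = Lap g x := by
  refine Finset.sum_congr rfl fun i _ => ?_
  have hpartial : (fun y => fderiv ℝ f y (EuclideanSpace.single i 1))
      =ᶠ[𝓝 x] fun y => fderiv ℝ g y (EuclideanSpace.single i 1) :=
    (h.fderiv (𝕜 := ℝ)).mono fun y hy => by simp only [hy]
  rw [hpartial.fderiv_eq]

theorem lap_comp_norm {F F' : ℝ → ℝ} {F'' : ℝ} {x : EuclideanSpace ℝ (Fin n)}
    (hx : x ≠ 0) (hF : ∀ r, 0 < r → HasDerivAt F (F' r) r) (hF' : HasDerivAt F' F'' ‖x‖) :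
    Lap (fun y => F ‖y‖) x = F'' + ((n : ℝ) - 1) / ‖x‖ * F' ‖x‖ := by
  have hr : 0 < ‖x‖ := norm_pos_iff.mpr hx
  set G : ℝ → ℝ := fun s => F' s / s
  set G' : ℝ := (F'' * ‖x‖ - F' ‖x‖ * 1) / ‖x‖ ^ 2
  have hG : HasDerivAt G G' ‖x‖ := hF'.div (hasDerivAt_id ‖x‖) hr.ne'
  have hpartial (i : Fin n) :
      (fun y => fderiv ℝ (fun z => F ‖z‖) y (EuclideanSpace.single i 1))
        =ᶠ[𝓝 x] fun y => G ‖y‖ * y i := by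
    filter_upwards [isOpen_compl_singleton.mem_nhds hx] with y hy
    rw [((hF _ (norm_pos_iff.mpr hy)).hasFDerivAt_comp_norm hy).fderiv]
    simp [G, EuclideanSpace.inner_single_right, div_mul_eq_mul_div]
  have hsecond (i : Fin n) :
      fderiv ℝ (fun y => fderiv ℝ (fun z => F ‖z‖) y (EuclideanSpace.single i 1)) x
        (EuclideanSpace.single i 1) = G ‖x‖ + G' / ‖x‖ * x i ^ 2 := by
    have hproj : HasFDerivAt (fun y : EuclideanSpace ℝ (Fin n) => y i)
        (EuclideanSpace.proj (𝕜 := ℝ) i) x := (EuclideanSpace.proj (𝕜 := ℝ) i).hasFDerivAt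
    have hprod : HasFDerivAt (fun y => G ‖y‖ * y i) _ x :=
      (hG.hasFDerivAt_comp_norm hx).mul hproj
    rw [(hpartial i).fderiv_eq, hprod.fderiv]
    simp [EuclideanSpace.inner_single_right]
    ring
  rw [Lap, Finset.sum_congr rfl fun i _ => hsecond i,
    Finset.sum_add_distrib, ← Finset.mul_sum, ← EuclideanSpace.real_norm_sq_eq]
  simp only [Finset.sum_const, Finset.card_fin, nsmul_eq_mul, G, G']
  field_simp
  ring

theorem lap_rpow_norm_mul_comp_neg_log (β : ℝ) {g g' g'' : ℝ → ℝ}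
    (hg : ∀ t, HasDerivAt g (g' t) t) (hg' : ∀ t, HasDerivAt g' (g'' t) t)
    {x : EuclideanSpace ℝ (Fin n)} (hx : x ≠ 0) :
    Lap (fun y => ‖y‖ ^ β * g (-Real.log ‖y‖)) x = ‖x‖ ^ (β - 2) * emdenFowlerLap n β
      (g (-Real.log ‖x‖)) (g' (-Real.log ‖x‖)) (g'' (-Real.log ‖x‖)) := by
  have hr : 0 < ‖x‖ := norm_pos_iff.mpr hx
  set t := -Real.log ‖x‖
  have hdiff : HasDerivAt (fun s => β * g s - g' s) (β * g' t - g'' t) t :=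
    ((hg t).const_mul β).sub (hg' t)
  have hF' := hasDerivAt_rpow_mul_comp_neg_log (β - 1) hr hdiff
  have hpow : ‖x‖ ^ β = ‖x‖ ^ (β - 2) * ‖x‖ ^ 2 := by
    rw [← Real.rpow_natCast, ← Real.rpow_add hr]
    norm_num
  rw [lap_comp_norm hx (fun s hs => hasDerivAt_rpow_mul_comp_neg_log β hs (hg _)) hF',
    show β - 1 - 1 = β - 2 by ring, Real.rpow_sub_one hr.ne', hpow, emdenFowlerLap]
  field_simp
  ring

theorem biLap_rpow_norm_mul_comp_neg_log (β : ℝ) {g : ℝ → ℝ} (hg : ContDiff ℝ 4 g)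
    {x : EuclideanSpace ℝ (Fin n)} (hx : x ≠ 0) :
    let D k := iteratedDeriv k g (-Real.log ‖x‖)
    BiLap (fun y => ‖y‖ ^ β * g (-Real.log ‖y‖)) x = ‖x‖ ^ (β - 2 - 2) *
      emdenFowlerLap n (β - 2) (emdenFowlerLap n β (D 0) (D 1) (D 2))
        (emdenFowlerLap n β (D 1) (D 2) (D 3)) (emdenFowlerLap n β (D 2) (D 3) (D 4)) := by
  have hD (k : ℕ) (hk : k < 4) (s : ℝ) :
      HasDerivAt (iteratedDeriv k g) (iteratedDeriv (k + 1) g s) s :=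
    hg.hasDerivAt_iteratedDeriv (mod_cast hk) s
  set W : ℕ → ℝ → ℝ := fun k s => emdenFowlerLap n β
    (iteratedDeriv k g s) (iteratedDeriv (k + 1) g s) (iteratedDeriv (k + 2) g s)
  have hW (k : ℕ) (hk : k < 2) (s : ℝ) : HasDerivAt (W k) (W (k + 1) s) s :=
    ((hD (k + 2) (by omega) s).sub ((hD (k + 1) (by omega) s).const_mul _)).add
      ((hD k (by omega) s).const_mul _)
  have hlap : Lap (fun y => ‖y‖ ^ β * g (-Real.log ‖y‖))
      =ᶠ[𝓝 x] fun y => ‖y‖ ^ (β - 2) * W 0 (-Real.log ‖y‖) := by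
    filter_upwards [isOpen_compl_singleton.mem_nhds hx] with y hy
    simpa only [W, iteratedDeriv_zero, zero_add, one_add_one_eq_two] using
      lap_rpow_norm_mul_comp_neg_log β (hD 0 (by norm_num)) (hD 1 (by norm_num)) hy
  exact hlap.lap_eq.trans
    (lap_rpow_norm_mul_comp_neg_log _ (hW 0 (by norm_num)) (hW 1 (by norm_num)) hx)

end Euclidean

/-- the Emden–Fowler change of coordinates conjugates the constant
Q-curvature operator to the Delaunay ODE operator. -/
theorem stmt_4 (n : ℕ) (hn : 5 ≤ n) (v : ℝ → ℝ) (hv : ContDiff ℝ 4 v)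
    (hvpos : ∀ t, 0 < v t) :
    ∀ x : EuclideanSpace ℝ (Fin n), x ≠ 0 →
      BiLap (fun y => ‖y‖ ^ (((4 : ℝ) - n) / 2) * v (-Real.log ‖y‖)) x -
          (n * (n - 4) * (n ^ 2 - 4) / 16 : ℝ) *
            (‖x‖ ^ (((4 : ℝ) - n) / 2) * v (-Real.log ‖x‖)) ^
              (((n : ℝ) + 4) / ((n : ℝ) - 4)) =
        ‖x‖ ^ (-((n : ℝ) + 4) / 2) *
          (iteratedDeriv 4 v (-Real.log ‖x‖) -
            ((n * (n - 4) + 8) / 2 : ℝ) * iteratedDeriv 2 v (-Real.log ‖x‖) +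
            (n ^ 2 * (n - 4) ^ 2 / 16 : ℝ) * v (-Real.log ‖x‖) -
            (n * (n ^ 2 - 4) * (n - 4) / 16 : ℝ) *
              v (-Real.log ‖x‖) ^ (((n : ℝ) + 4) / ((n : ℝ) - 4))) := by
  intro x hx
  set a : ℝ := (4 - n) / 2
  set p : ℝ := (n + 4) / (n - 4)
  have hn4 : (n : ℝ) - 4 ≠ 0 := sub_ne_zero.mpr (by exact_mod_cast (by omega : n ≠ 4))
  have hexp : a * p = a - 2 - 2 := by
    simp only [a, p]
    field_simp
    ring
  have hnonlin : (‖x‖ ^ a * v (-Real.log ‖x‖)) ^ p =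
      ‖x‖ ^ (a - 2 - 2) * v (-Real.log ‖x‖) ^ p := by
    rw [Real.mul_rpow (by positivity) (hvpos _).le, ← Real.rpow_mul (norm_nonneg x), hexp]
  rw [biLap_rpow_norm_mul_comp_neg_log a hv hx, hnonlin,
    show -((n : ℝ) + 4) / 2 = a - 2 - 2 by ring]
  simp only [emdenFowlerLap, iteratedDeriv_zero, a]
  ring
end

section
/- Let n ≥ 5 be an integer and let v : ℝ → (0,∞) be a smooth solution of the Delaunay ODE v⁗ − ((n(n−4)+8)/2) v″ + (n²(n−4)²/16) v − (n(n²−4)(n−4)/16) v^{(n+4)/(n−4)} = 0. Define u(x) = |x|^{(4−n)/2} v(−log|x|) on ℝⁿ \ {0}. Then for each index j ∈ {1,…,n} the function w(x) = x_j |x|^{(4−n)/2} ( ((n−4)/2) v(−log|x|) − v′(−log|x|) ) satisfies the linearized equation Δ²w = (n(n+4)(n²−4)/16) u^{8/(n−4)} w on ℝⁿ \ {0}. -/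
open scoped BigOperators

open Filter

theorem Lap_congr {n : ℕ} {f g : EuclideanSpace ℝ (Fin n) → ℝ} {x : EuclideanSpace ℝ (Fin n)}
    (h : f =ᶠ[nhds x] g) : Lap f x = Lap g x := by
  unfold Lap
  refine Finset.sum_congr rfl fun i _ => ?_
  have h2 : (fun y => fderiv ℝ f y (EuclideanSpace.single i 1)) =ᶠ[nhds x]
      (fun y => fderiv ℝ g y (EuclideanSpace.single i 1)) := by
    filter_upwards [eventually_eventuallyEq_nhds.2 h] with y hy
    rw [hy.fderiv_eq]
  rw [h2.fderiv_eq]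

theorem BiLap_congr {n : ℕ} {f g : EuclideanSpace ℝ (Fin n) → ℝ} {x : EuclideanSpace ℝ (Fin n)}
    (h : f =ᶠ[nhds x] g) : BiLap f x = BiLap g x := by
  unfold BiLap
  apply Lap_congr
  filter_upwards [eventually_eventuallyEq_nhds.2 h] with y hy
  exact Lap_congr hy

theorem norm_sq_eq_sum {n : ℕ} (x : EuclideanSpace ℝ (Fin n)) : ‖x‖^2 = ∑ i, x i ^ 2 := by
  rw [EuclideanSpace.norm_eq, Real.sq_sqrt (by positivity)]
  simp [sq_abs]

theorem fderiv_radial {n : ℕ} (j i : Fin n) (G G₁ : ℝ → ℝ)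
    (hG : ∀ s : ℝ, 0 < s → HasDerivAt G (G₁ s) s)
    {y : EuclideanSpace ℝ (Fin n)} (hy : y ≠ 0) :
    fderiv ℝ (fun z => z j * G (‖z‖^2)) y (EuclideanSpace.single i 1)
      = (if i = j then 1 else 0) * G (‖y‖^2) + 2 * y i * y j * G₁ (‖y‖^2) := by
  have hs : (0:ℝ) < ‖y‖^2 := pow_pos (norm_pos_iff.mpr hy) 2
  have h1 : HasFDerivAt (fun z : EuclideanSpace ℝ (Fin n) => z j)
      (EuclideanSpace.proj j : EuclideanSpace ℝ (Fin n) →L[ℝ] ℝ) y :=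
    ContinuousLinearMap.hasFDerivAt (EuclideanSpace.proj (𝕜 := ℝ) j)
  have h2 : HasFDerivAt (fun z : EuclideanSpace ℝ (Fin n) => ‖z‖^2)
      ((2:ℕ) • (innerSL ℝ y)) y := (hasStrictFDerivAt_norm_sq y).hasFDerivAt
  have h3 : HasFDerivAt (fun z : EuclideanSpace ℝ (Fin n) => G (‖z‖^2))
      (G₁ (‖y‖^2) • ((2:ℕ) • (innerSL ℝ y))) y :=
    (hG _ hs).comp_hasFDerivAt y h2
  have h4 : HasFDerivAt (fun z : EuclideanSpace ℝ (Fin n) => z j * G (‖z‖^2)) _ y := h1.mul h3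
  rw [h4.fderiv]
  simp only [ContinuousLinearMap.add_apply, ContinuousLinearMap.smul_apply,
    PiLp.proj_apply, innerSL_apply_apply, smul_eq_mul, nsmul_eq_mul]
  have hinner : (inner ℝ y (EuclideanSpace.single i (1:ℝ)) : ℝ) = y i := by
    simp [EuclideanSpace.inner_single_right]
  rw [hinner]
  have hsing : (EuclideanSpace.single i (1:ℝ)) j = if i = j then 1 else 0 := by
    simp [EuclideanSpace.single_apply, eq_comm]
  rw [hsing]
  ring

theorem lap_radial {n : ℕ} (j : Fin n) (G G₁ G₂ : ℝ → ℝ)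
    (hG : ∀ s : ℝ, 0 < s → HasDerivAt G (G₁ s) s)
    (hG₁ : ∀ s : ℝ, 0 < s → HasDerivAt G₁ (G₂ s) s)
    {x : EuclideanSpace ℝ (Fin n)} (hx : x ≠ 0) :
    Lap (fun z => z j * G (‖z‖^2)) x
      = x j * (4 * ‖x‖^2 * G₂ (‖x‖^2) + (2*(n:ℝ)+4) * G₁ (‖x‖^2)) := by
  have hs : (0:ℝ) < ‖x‖^2 := pow_pos (norm_pos_iff.mpr hx) 2
  have hval : ∀ i : Fin n,
      fderiv ℝ (fun y => fderiv ℝ (fun z => z j * G (‖z‖^2)) y (EuclideanSpace.single i 1)) x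
        (EuclideanSpace.single i 1)
      = (if i = j then 4 * x i * G₁ (‖x‖^2) else 0)
        + (4 * x i^2 * x j * G₂ (‖x‖^2) + 2 * x j * G₁ (‖x‖^2)) := by
    intro i
    have hev : (fun y => fderiv ℝ (fun z => z j * G (‖z‖^2)) y (EuclideanSpace.single i 1))
        =ᶠ[nhds x] (fun y =>
          (if i = j then 1 else 0) * G (‖y‖^2) + 2 * y i * y j * G₁ (‖y‖^2)) := by
      filter_upwards [IsOpen.mem_nhds (isOpen_compl_singleton) hx] with y hy
      exact fderiv_radial j i G G₁ hG hy
    rw [hev.fderiv_eq]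
    have hA : HasFDerivAt (fun z : EuclideanSpace ℝ (Fin n) => G (‖z‖^2))
        (G₁ (‖x‖^2) • ((2:ℕ) • (innerSL ℝ x))) x :=
      (hG _ hs).comp_hasFDerivAt x (hasStrictFDerivAt_norm_sq x).hasFDerivAt
    have hB : HasFDerivAt (fun z : EuclideanSpace ℝ (Fin n) => G₁ (‖z‖^2))
        (G₂ (‖x‖^2) • ((2:ℕ) • (innerSL ℝ x))) x :=
      (hG₁ _ hs).comp_hasFDerivAt x (hasStrictFDerivAt_norm_sq x).hasFDerivAt
    have hpi : HasFDerivAt (fun z : EuclideanSpace ℝ (Fin n) => z i)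
        (EuclideanSpace.proj (𝕜 := ℝ) i) x :=
      ContinuousLinearMap.hasFDerivAt (EuclideanSpace.proj (𝕜 := ℝ) i)
    have hpj : HasFDerivAt (fun z : EuclideanSpace ℝ (Fin n) => z j)
        (EuclideanSpace.proj (𝕜 := ℝ) j) x :=
      ContinuousLinearMap.hasFDerivAt (EuclideanSpace.proj (𝕜 := ℝ) j)
    have hij := hpi.mul hpj
    have hprod := hij.mul hB
    have hfull : HasFDerivAt (fun z : EuclideanSpace ℝ (Fin n) =>
        (if i = j then (1:ℝ) else 0) * G (‖z‖^2) + 2 * (z i * z j * G₁ (‖z‖^2))) _ x := (hA.const_mul (if i = j then (1:ℝ) else 0)).add (hprod.const_mul 2)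
    have heq : (fun z : EuclideanSpace ℝ (Fin n) =>
        (if i = j then (1:ℝ) else 0) * G (‖z‖^2) + 2 * (z i * z j * G₁ (‖z‖^2)))
        = (fun z : EuclideanSpace ℝ (Fin n) =>
        (if i = j then (1:ℝ) else 0) * G (‖z‖^2) + 2 * z i * z j * G₁ (‖z‖^2)) := by
      funext z; ring
    rw [heq] at hfull
    rw [hfull.fderiv]
    simp only [ContinuousLinearMap.add_apply, ContinuousLinearMap.smul_apply,
      PiLp.proj_apply, innerSL_apply_apply, smul_eq_mul, nsmul_eq_mul]
    have hinner : (inner ℝ x (EuclideanSpace.single i (1:ℝ)) : ℝ) = x i := by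
      simp [EuclideanSpace.inner_single_right]
    rw [hinner]
    have hsj : (EuclideanSpace.single i (1:ℝ)) j = if i = j then 1 else 0 := by
      simp [EuclideanSpace.single_apply, eq_comm]
    have hsi : (EuclideanSpace.single i (1:ℝ)) i = 1 := by
      simp [EuclideanSpace.single_apply]
    rw [hsj, hsi]
    by_cases h : i = j <;> simp [h] <;> ring
  unfold Lap
  rw [Finset.sum_congr rfl fun i _ => hval i]
  rw [Finset.sum_add_distrib, Finset.sum_ite_eq' Finset.univ j
    (fun i => 4 * x i * G₁ (‖x‖^2))]
  simp only [Finset.mem_univ, if_true]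
  rw [Finset.sum_add_distrib]
  have h1 : ∑ i : Fin n, 4 * x i ^ 2 * x j * G₂ (‖x‖^2)
      = 4 * ‖x‖^2 * x j * G₂ (‖x‖^2) := by
    rw [← Finset.sum_mul, ← Finset.sum_mul, ← Finset.mul_sum, ← norm_sq_eq_sum]
  have h2 : ∑ _i : Fin n, 2 * x j * G₁ (‖x‖^2) = (n:ℝ) * (2 * x j * G₁ (‖x‖^2)) := by
    rw [Finset.sum_const, Finset.card_univ, Fintype.card_fin, nsmul_eq_mul]
  rw [h1, h2]
  ring

theorem bilap_radial {n : ℕ} (j : Fin n) (G G₁ G₂ G₃ G₄ : ℝ → ℝ)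
    (hG : ∀ s : ℝ, 0 < s → HasDerivAt G (G₁ s) s)
    (hG₁ : ∀ s : ℝ, 0 < s → HasDerivAt G₁ (G₂ s) s)
    (hG₂ : ∀ s : ℝ, 0 < s → HasDerivAt G₂ (G₃ s) s)
    (hG₃ : ∀ s : ℝ, 0 < s → HasDerivAt G₃ (G₄ s) s)
    {x : EuclideanSpace ℝ (Fin n)} (hx : x ≠ 0) :
    BiLap (fun z => z j * G (‖z‖^2)) x
      = x j * (16 * (‖x‖^2)^2 * G₄ (‖x‖^2) + (16*(n:ℝ)+64) * ‖x‖^2 * G₃ (‖x‖^2)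
          + (2*(n:ℝ)+4) * (2*(n:ℝ)+8) * G₂ (‖x‖^2)) := by
  have hH : ∀ s : ℝ, 0 < s → HasDerivAt (fun s => 4*s*G₂ s + (2*(n:ℝ)+4)*G₁ s)
      ((fun s => (4*G₂ s + 4*s*G₃ s) + (2*(n:ℝ)+4)*G₂ s) s) s := by
    intro s hs
    have h := (((hasDerivAt_id s).const_mul (4:ℝ)).mul (hG₂ s hs)).add
      ((hG₁ s hs).const_mul (2*(n:ℝ)+4))
    refine h.congr_deriv ?_
    simp only [id]; ring
  have hH₁ : ∀ s : ℝ, 0 < s → HasDerivAt (fun s => (4*G₂ s + 4*s*G₃ s) + (2*(n:ℝ)+4)*G₂ s)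
      ((fun s => (4*G₃ s + (4*G₃ s + 4*s*G₄ s)) + (2*(n:ℝ)+4)*G₃ s) s) s := by
    intro s hs
    have h := (((hG₂ s hs).const_mul (4:ℝ)).add
        (((hasDerivAt_id s).const_mul (4:ℝ)).mul (hG₃ s hs))).add
      ((hG₂ s hs).const_mul (2*(n:ℝ)+4))
    refine h.congr_deriv ?_
    simp only [id]; ring
  have hev : Lap (fun z : EuclideanSpace ℝ (Fin n) => z j * G (‖z‖^2)) =ᶠ[nhds x]
      (fun y => y j * (fun s => 4*s*G₂ s + (2*(n:ℝ)+4)*G₁ s) (‖y‖^2)) := by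
    filter_upwards [IsOpen.mem_nhds isOpen_compl_singleton hx] with y hy
    exact lap_radial j G G₁ G₂ hG hG₁ hy
  unfold BiLap
  rw [Lap_congr hev, lap_radial j _ _ _ hH hH₁ hx]
  ring

theorem derivQ (ψ ψ' : ℝ → ℝ) (hψ : ∀ t, HasDerivAt ψ (ψ' t) t) (γ : ℝ) {s : ℝ} (hs : 0 < s) :
    HasDerivAt (fun σ : ℝ => σ ^ γ * ψ (-Real.log σ / 2))
      (s ^ (γ-1) * (γ * ψ (-Real.log s / 2) - ψ' (-Real.log s / 2) / 2)) s := by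
  have h1 : HasDerivAt (fun σ : ℝ => σ ^ γ) (γ * s ^ (γ-1)) s :=
    Real.hasDerivAt_rpow_const (Or.inl (ne_of_gt hs))
  have h2 : HasDerivAt (fun σ : ℝ => -Real.log σ / 2) (-s⁻¹/2) s :=
    ((Real.hasDerivAt_log (ne_of_gt hs)).neg).div_const 2
  have h3 := (hψ (-Real.log s / 2)).comp s h2
  have h4 := h1.mul h3
  refine h4.congr_deriv ?_
  have hss : s ^ γ = s ^ (γ-1) * s := by
    rw [← Real.rpow_add_one (ne_of_gt hs)]; ring_nf
  rw [Function.comp, hss]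
  field_simp
  ring

noncomputable def bb (m : ℝ) : ℝ := (4 - m) / 4

noncomputable def ph (m : ℝ) (v : ℝ → ℝ) (k : ℕ) : ℝ → ℝ :=
  fun t => (m - 4)/2 * iteratedDeriv k v t - iteratedDeriv (k+1) v t

noncomputable def P0 (m : ℝ) (v : ℝ → ℝ) : ℝ → ℝ := fun t =>
  ((1) * 1) * ph m v 0 t

noncomputable def P1 (m : ℝ) (v : ℝ → ℝ) : ℝ → ℝ := fun t =>
  ((1) * bb m) * ph m v 0 t + ((-1/2) * 1) * ph m v 1 t

noncomputable def P2 (m : ℝ) (v : ℝ → ℝ) : ℝ → ℝ := fun t =>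
  ((-1) * bb m + (1) * bb m ^ 2) * ph m v 0 t + ((1/2) * 1 + (-1) * bb m) * ph m v 1 t + ((1/4) * 1) * ph m v 2 t

noncomputable def P3 (m : ℝ) (v : ℝ → ℝ) : ℝ → ℝ := fun t =>
  ((2) * bb m + (-3) * bb m ^ 2 + (1) * bb m ^ 3) * ph m v 0 t + ((-1) * 1 + (3) * bb m + (-3/2) * bb m ^ 2) * ph m v 1 t + ((-3/4) * 1 + (3/4) * bb m) * ph m v 2 t + ((-1/8) * 1) * ph m v 3 t

noncomputable def P4 (m : ℝ) (v : ℝ → ℝ) : ℝ → ℝ := fun t =>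
  ((-6) * bb m + (11) * bb m ^ 2 + (-6) * bb m ^ 3 + (1) * bb m ^ 4) * ph m v 0 t + ((3) * 1 + (-11) * bb m + (9) * bb m ^ 2 + (-2) * bb m ^ 3) * ph m v 1 t + ((11/4) * 1 + (-9/2) * bb m + (3/2) * bb m ^ 2) * ph m v 2 t + ((3/4) * 1 + (-1/2) * bb m) * ph m v 3 t + ((1/16) * 1) * ph m v 4 t

noncomputable def DP0 (m : ℝ) (v : ℝ → ℝ) : ℝ → ℝ := fun t =>
  ((1) * 1) * ph m v 1 t

noncomputable def DP1 (m : ℝ) (v : ℝ → ℝ) : ℝ → ℝ := fun t =>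
  ((1) * bb m) * ph m v 1 t + ((-1/2) * 1) * ph m v 2 t

noncomputable def DP2 (m : ℝ) (v : ℝ → ℝ) : ℝ → ℝ := fun t =>
  ((-1) * bb m + (1) * bb m ^ 2) * ph m v 1 t + ((1/2) * 1 + (-1) * bb m) * ph m v 2 t + ((1/4) * 1) * ph m v 3 t

noncomputable def DP3 (m : ℝ) (v : ℝ → ℝ) : ℝ → ℝ := fun t =>
  ((2) * bb m + (-3) * bb m ^ 2 + (1) * bb m ^ 3) * ph m v 1 t + ((-1) * 1 + (3) * bb m + (-3/2) * bb m ^ 2) * ph m v 2 t + ((-3/4) * 1 + (3/4) * bb m) * ph m v 3 t + ((-1/8) * 1) * ph m v 4 t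

theorem hdP0 {m : ℝ} {v : ℝ → ℝ}
    (hph : ∀ (i : ℕ) (t : ℝ), HasDerivAt (ph m v i) (ph m v (i+1) t) t) (t : ℝ) :
    HasDerivAt (P0 m v) (DP0 m v t) t := by
  have h := (HasDerivAt.const_mul (((1) * 1)) (hph 0 t))
  exact h

theorem hdP1 {m : ℝ} {v : ℝ → ℝ}
    (hph : ∀ (i : ℕ) (t : ℝ), HasDerivAt (ph m v i) (ph m v (i+1) t) t) (t : ℝ) :
    HasDerivAt (P1 m v) (DP1 m v t) t := by
  have h := ((HasDerivAt.const_mul (((1) * bb m)) (hph 0 t)).add (HasDerivAt.const_mul (((-1/2) * 1)) (hph 1 t)))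
  exact h

theorem hdP2 {m : ℝ} {v : ℝ → ℝ}
    (hph : ∀ (i : ℕ) (t : ℝ), HasDerivAt (ph m v i) (ph m v (i+1) t) t) (t : ℝ) :
    HasDerivAt (P2 m v) (DP2 m v t) t := by
  have h := (((HasDerivAt.const_mul (((-1) * bb m + (1) * bb m ^ 2)) (hph 0 t)).add (HasDerivAt.const_mul (((1/2) * 1 + (-1) * bb m)) (hph 1 t))).add (HasDerivAt.const_mul (((1/4) * 1)) (hph 2 t)))
  exact h

theorem hdP3 {m : ℝ} {v : ℝ → ℝ}
    (hph : ∀ (i : ℕ) (t : ℝ), HasDerivAt (ph m v i) (ph m v (i+1) t) t) (t : ℝ) :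
    HasDerivAt (P3 m v) (DP3 m v t) t := by
  have h := ((((HasDerivAt.const_mul (((2) * bb m + (-3) * bb m ^ 2 + (1) * bb m ^ 3)) (hph 0 t)).add (HasDerivAt.const_mul (((-1) * 1 + (3) * bb m + (-3/2) * bb m ^ 2)) (hph 1 t))).add (HasDerivAt.const_mul (((-3/4) * 1 + (3/4) * bb m)) (hph 2 t))).add (HasDerivAt.const_mul (((-1/8) * 1)) (hph 3 t)))
  exact h

theorem hVd_lemma {v : ℝ → ℝ} (hv : ContDiff ℝ (⊤ : ℕ∞) v) :
    ∀ (k : ℕ) (t : ℝ), HasDerivAt (iteratedDeriv k v) (iteratedDeriv (k+1) v t) t := by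
  intro k t
  have hdiff : Differentiable ℝ (iteratedDeriv k v) :=
    hv.differentiable_iteratedDeriv k (by exact_mod_cast lt_top_iff_ne_top.2 (by simp))
  have h := (hdiff t).hasDerivAt
  rwa [← iteratedDeriv_succ] at h

theorem hph_deriv {v : ℝ → ℝ} (hv : ContDiff ℝ (⊤ : ℕ∞) v) (m : ℝ) :
    ∀ (i : ℕ) (t : ℝ), HasDerivAt (ph m v i) (ph m v (i+1) t) t := by
  intro i t
  exact (HasDerivAt.const_mul ((m-4)/2) (hVd_lemma hv i t)).sub (hVd_lemma hv (i+1) t)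

noncomputable def G0 (m : ℝ) (v : ℝ → ℝ) : ℝ → ℝ := fun s => s ^ (bb m) * P0 m v (-Real.log s / 2)
noncomputable def G1 (m : ℝ) (v : ℝ → ℝ) : ℝ → ℝ := fun s => s ^ (bb m - 1) * P1 m v (-Real.log s / 2)
noncomputable def G2 (m : ℝ) (v : ℝ → ℝ) : ℝ → ℝ := fun s => s ^ (bb m - 2) * P2 m v (-Real.log s / 2)
noncomputable def G3 (m : ℝ) (v : ℝ → ℝ) : ℝ → ℝ := fun s => s ^ (bb m - 3) * P3 m v (-Real.log s / 2)
noncomputable def G4 (m : ℝ) (v : ℝ → ℝ) : ℝ → ℝ := fun s => s ^ (bb m - 4) * P4 m v (-Real.log s / 2)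

theorem hdG0 {v : ℝ → ℝ} (hv : ContDiff ℝ (⊤ : ℕ∞) v) (m : ℝ) :
    ∀ s : ℝ, 0 < s → HasDerivAt (G0 m v) (G1 m v s) s := by
  intro s hs
  have h := derivQ (P0 m v) (DP0 m v) (hdP0 (hph_deriv hv m)) (bb m) hs
  refine h.congr_deriv (Eq.symm ?_)
  show G1 m v s = _
  simp only [G1, P1, P0, DP0]
  ring

theorem hdG1 {v : ℝ → ℝ} (hv : ContDiff ℝ (⊤ : ℕ∞) v) (m : ℝ) :
    ∀ s : ℝ, 0 < s → HasDerivAt (G1 m v) (G2 m v s) s := by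
  intro s hs
  have h := derivQ (P1 m v) (DP1 m v) (hdP1 (hph_deriv hv m)) (bb m - 1) hs
  refine h.congr_deriv (Eq.symm ?_)
  show G2 m v s = _
  rw [show bb m - 1 - 1 = bb m - 2 by ring]
  simp only [G2, P2, P1, DP1]
  ring

theorem hdG2 {v : ℝ → ℝ} (hv : ContDiff ℝ (⊤ : ℕ∞) v) (m : ℝ) :
    ∀ s : ℝ, 0 < s → HasDerivAt (G2 m v) (G3 m v s) s := by
  intro s hs
  have h := derivQ (P2 m v) (DP2 m v) (hdP2 (hph_deriv hv m)) (bb m - 2) hs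
  refine h.congr_deriv (Eq.symm ?_)
  show G3 m v s = _
  rw [show bb m - 2 - 1 = bb m - 3 by ring]
  simp only [G3, P3, P2, DP2]
  ring

theorem hdG3 {v : ℝ → ℝ} (hv : ContDiff ℝ (⊤ : ℕ∞) v) (m : ℝ) :
    ∀ s : ℝ, 0 < s → HasDerivAt (G3 m v) (G4 m v s) s := by
  intro s hs
  have h := derivQ (P3 m v) (DP3 m v) (hdP3 (hph_deriv hv m)) (bb m - 3) hs
  refine h.congr_deriv (Eq.symm ?_)
  show G4 m v s = _
  rw [show bb m - 3 - 1 = bb m - 4 by ring]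
  simp only [G4, P4, P3, DP3]
  ring

set_option maxHeartbeats 2000000 in
theorem star_identity (n : ℕ) (hn : 5 ≤ n) (v : ℝ → ℝ) (hv : ContDiff ℝ (⊤ : ℕ∞) v)
    (hvpos : ∀ t, 0 < v t)
    (hODE : ∀ t : ℝ,
      iteratedDeriv 4 v t - ((n * (n - 4) + 8) / 2 : ℝ) * iteratedDeriv 2 v t +
        (n ^ 2 * (n - 4) ^ 2 / 16 : ℝ) * v t -
        (n * (n ^ 2 - 4) * (n - 4) / 16 : ℝ) *
          v t ^ (((n : ℝ) + 4) / ((n : ℝ) - 4)) = 0)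
    (t : ℝ) :
    16 * P4 (n:ℝ) v t + (16*(n:ℝ)+64) * P3 (n:ℝ) v t
        + (2*(n:ℝ)+4)*(2*(n:ℝ)+8) * P2 (n:ℝ) v t
      = (n:ℝ)*((n:ℝ)+4)*((n:ℝ)^2-4)/16 * v t ^ ((8:ℝ)/((n:ℝ)-4)) * P0 (n:ℝ) v t := by
  set m : ℝ := (n:ℝ) with hmdef
  have hm : (5:ℝ) ≤ m := by rw [hmdef]; exact_mod_cast hn
  have hm4 : m - 4 ≠ 0 := by intro h; linarith
  have hvt : v t ≠ 0 := ne_of_gt (hvpos t)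
  have hVd := hVd_lemma hv
  have hv0 : ∀ τ : ℝ, HasDerivAt v (iteratedDeriv 1 v τ) τ := by
    intro τ
    have h := hVd 0 τ
    rwa [iteratedDeriv_zero] at h
  have hp : HasDerivAt (fun τ => v τ ^ ((m+4)/(m-4)))
      (iteratedDeriv 1 v t * ((m+4)/(m-4)) * v t ^ ((m+4)/(m-4)-1)) t :=
    (hv0 t).rpow_const (Or.inl hvt)
  have hF := (((hVd 4 t).sub
      (HasDerivAt.const_mul ((m*(m-4)+8)/2) (hVd 2 t))).add
      (HasDerivAt.const_mul (m^2*(m-4)^2/16) (hv0 t))).sub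
      (HasDerivAt.const_mul (m*(m^2-4)*(m-4)/16) hp)
  have hzero : HasDerivAt (fun τ => iteratedDeriv 4 v τ - ((m*(m-4)+8)/2) * iteratedDeriv 2 v τ
      + (m^2*(m-4)^2/16) * v τ - (m*(m^2-4)*(m-4)/16) * v τ ^ ((m+4)/(m-4)))
      0 t := by
    have hfun : (fun τ => iteratedDeriv 4 v τ - ((m*(m-4)+8)/2) * iteratedDeriv 2 v τ
        + (m^2*(m-4)^2/16) * v τ - (m*(m^2-4)*(m-4)/16) * v τ ^ ((m+4)/(m-4)))
        = fun _ => (0:ℝ) := funext hODE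
    rw [hfun]
    exact hasDerivAt_const t 0
  have hder0 := hF.unique hzero
  have hp1 : v t ^ ((m+4)/(m-4)) = v t ^ ((8:ℝ)/(m-4)) * v t := by
    rw [← Real.rpow_add_one hvt]
    congr 1
    field_simp
    ring
  have hp2 : v t ^ ((m+4)/(m-4) - 1) = v t ^ ((8:ℝ)/(m-4)) := by
    congr 1
    field_simp
    ring
  have h4' : iteratedDeriv 4 v t = ((m*(m-4)+8)/2) * iteratedDeriv 2 v t
      - (m^2*(m-4)^2/16) * v t
      + (m*(m^2-4)*(m-4)/16) * (v t ^ ((8:ℝ)/(m-4)) * v t) := by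
    rw [← hp1]
    linarith [hODE t]
  have h5' : iteratedDeriv 5 v t = ((m*(m-4)+8)/2) * iteratedDeriv 3 v t
      - (m^2*(m-4)^2/16) * iteratedDeriv 1 v t
      + (m*(m^2-4)*(m-4)/16) * (iteratedDeriv 1 v t * ((m+4)/(m-4)) * v t ^ ((8:ℝ)/(m-4))) := by
    rw [← hp2]
    linarith [hder0]
  simp only [P4, P3, P2, P0, ph, bb, iteratedDeriv_zero, Nat.reduceAdd]
  rw [h4', h5']
  field_simp
  ring

set_option maxHeartbeats 1000000 in
/-- for a global positive smooth Delaunay solution `v`, the field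
`w(x) = x_j |x|^{(4−n)/2} (((n−4)/2) v(−log|x|) − v′(−log|x|))`, arising from translating
the point at infinity, is a Jacobi field of `u(x) = |x|^{(4−n)/2} v(−log|x|)` on `ℝⁿ \ {0}`. -/
theorem stmt_14 (n : ℕ) (hn : 5 ≤ n) (v : ℝ → ℝ) (hv : ContDiff ℝ (⊤ : ℕ∞) v)
    (hvpos : ∀ t, 0 < v t)
    (hODE : ∀ t : ℝ,
      iteratedDeriv 4 v t - ((n * (n - 4) + 8) / 2 : ℝ) * iteratedDeriv 2 v t +
        (n ^ 2 * (n - 4) ^ 2 / 16 : ℝ) * v t -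
        (n * (n ^ 2 - 4) * (n - 4) / 16 : ℝ) *
          v t ^ (((n : ℝ) + 4) / ((n : ℝ) - 4)) = 0)
    (j : Fin n) :
    ∀ x : EuclideanSpace ℝ (Fin n), x ≠ 0 →
      BiLap (fun y => y j * ‖y‖ ^ (((4 : ℝ) - n) / 2) *
          (((n : ℝ) - 4) / 2 * v (-Real.log ‖y‖) - deriv v (-Real.log ‖y‖))) x =
        (n * (n + 4) * (n ^ 2 - 4) / 16 : ℝ) *
          (‖x‖ ^ (((4 : ℝ) - n) / 2) * v (-Real.log ‖x‖)) ^ ((8 : ℝ) / ((n : ℝ) - 4)) *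
          (x j * ‖x‖ ^ (((4 : ℝ) - n) / 2) *
            (((n : ℝ) - 4) / 2 * v (-Real.log ‖x‖) - deriv v (-Real.log ‖x‖))) := by
  
  intro x hx
  have hm : (5:ℝ) ≤ (n:ℝ) := by exact_mod_cast hn
  have hm4 : (n:ℝ) - 4 ≠ 0 := by intro h; linarith
  have hnx : (0:ℝ) < ‖x‖ := norm_pos_iff.mpr hx
  have hs : (0:ℝ) < ‖x‖^2 := pow_pos hnx 2
  -- identification of the function with the radial normal form
  have hev : (fun y : EuclideanSpace ℝ (Fin n) => y j * ‖y‖ ^ (((4 : ℝ) - n) / 2) *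
          (((n : ℝ) - 4) / 2 * v (-Real.log ‖y‖) - deriv v (-Real.log ‖y‖)))
      =ᶠ[nhds x] (fun y => y j * G0 (n:ℝ) v (‖y‖^2)) := by
    filter_upwards [IsOpen.mem_nhds isOpen_compl_singleton hx] with y hy
    have hny : (0:ℝ) < ‖y‖ := norm_pos_iff.mpr hy
    have hlog : -Real.log (‖y‖^2) / 2 = -Real.log ‖y‖ := by
      rw [Real.log_pow]; ring
    have hpow : ((‖y‖^2 : ℝ)) ^ (bb (n:ℝ)) = ‖y‖ ^ (((4 : ℝ) - n) / 2) := by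
      rw [← Real.rpow_natCast ‖y‖ 2, ← Real.rpow_mul (norm_nonneg y)]
      congr 1
      simp [bb]
      ring
    show _ = y j * G0 (n:ℝ) v (‖y‖^2)
    unfold G0
    rw [hlog, hpow]
    simp only [P0, ph, Nat.reduceAdd, iteratedDeriv_zero, iteratedDeriv_one]
    ring
  rw [BiLap_congr hev]
  rw [bilap_radial j (G0 (n:ℝ) v) (G1 (n:ℝ) v) (G2 (n:ℝ) v) (G3 (n:ℝ) v) (G4 (n:ℝ) v)
    (hdG0 hv (n:ℝ)) (hdG1 hv (n:ℝ)) (hdG2 hv (n:ℝ)) (hdG3 hv (n:ℝ)) hx]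
  have hlogx : -Real.log (‖x‖^2) / 2 = -Real.log ‖x‖ := by
    rw [Real.log_pow]; ring
  unfold G2 G3 G4
  rw [hlogx]
  -- collect powers
  have q1 : ((‖x‖^2:ℝ))^(2:ℕ) * (‖x‖^2) ^ (bb (n:ℝ) - 4) = (‖x‖^2) ^ (bb (n:ℝ) - 2) := by
    rw [← Real.rpow_natCast (‖x‖^2) 2, ← Real.rpow_add hs]
    congr 1
    push_cast; ring
  have q2 : (‖x‖^2:ℝ) * (‖x‖^2) ^ (bb (n:ℝ) - 3) = (‖x‖^2) ^ (bb (n:ℝ) - 2) := by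
    nth_rewrite 1 [← Real.rpow_one (‖x‖^2:ℝ)]
    rw [← Real.rpow_add hs]
    congr 1
    ring
  have hcollect : x j * (16 * (‖x‖^2)^2 * ((‖x‖^2) ^ (bb (n:ℝ) - 4) * P4 (n:ℝ) v (-Real.log ‖x‖))
        + (16*(n:ℝ)+64) * ‖x‖^2 * ((‖x‖^2) ^ (bb (n:ℝ) - 3) * P3 (n:ℝ) v (-Real.log ‖x‖))
        + (2*(n:ℝ)+4) * (2*(n:ℝ)+8) * ((‖x‖^2) ^ (bb (n:ℝ) - 2) * P2 (n:ℝ) v (-Real.log ‖x‖)))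
      = x j * ((‖x‖^2) ^ (bb (n:ℝ) - 2) *
          (16 * P4 (n:ℝ) v (-Real.log ‖x‖) + (16*(n:ℝ)+64) * P3 (n:ℝ) v (-Real.log ‖x‖)
            + (2*(n:ℝ)+4)*(2*(n:ℝ)+8) * P2 (n:ℝ) v (-Real.log ‖x‖))) := by
    linear_combination (16 * P4 (n:ℝ) v (-Real.log ‖x‖) * x j) * q1
      + ((16*(n:ℝ)+64) * P3 (n:ℝ) v (-Real.log ‖x‖) * x j) * q2
  rw [hcollect, star_identity n hn v hv hvpos hODE (-Real.log ‖x‖)]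
  -- now pure power algebra
  have hQ1 : ((‖x‖^2:ℝ)) ^ (bb (n:ℝ) - 2) = ‖x‖ ^ (((4 : ℝ) - n) / 2) * ‖x‖ ^ ((-4 : ℝ)) := by
    rw [← Real.rpow_natCast ‖x‖ 2, ← Real.rpow_mul (norm_nonneg x), ← Real.rpow_add hnx]
    congr 1
    simp [bb]; ring
  have hQ2 : (‖x‖ ^ (((4 : ℝ) - n) / 2) * v (-Real.log ‖x‖)) ^ ((8 : ℝ) / ((n : ℝ) - 4))
      = ‖x‖ ^ ((-4 : ℝ)) * v (-Real.log ‖x‖) ^ ((8 : ℝ) / ((n : ℝ) - 4)) := by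
    rw [Real.mul_rpow (Real.rpow_nonneg (norm_nonneg x) _) (le_of_lt (hvpos _)),
      ← Real.rpow_mul (norm_nonneg x)]
    congr 2
    field_simp
    ring
  rw [hQ1, hQ2]
  simp only [P0, ph, Nat.reduceAdd, iteratedDeriv_zero, iteratedDeriv_one]
  ring
end

section
/- Let n ≥ 5 be an integer and M > 0, and let v : ℝ → ℝ be a C² function with |v(t)| ≤ M, |v′(t)| ≤ M and |v″(t)| ≤ M for all t ∈ ℝ. For t ∈ ℝ, θ in the unit sphere S^{n−1} ⊂ ℝⁿ, and a ∈ ℝⁿ with θ ≠ e^{−t}a, define v_a(t,θ) = |θ − e^{−t} a|^{(4−n)/2} · v( t + log|θ − e^{−t} a| ). Then there exists a constant C > 0, depending only on n and M, such that whenever e^{−t}|a| ≤ 1/2 one has | v_a(t,θ) − v(t) − e^{−t} ⟨θ, a⟩ ( ((n−4)/2) v(t) − v′(t) ) | ≤ C |a|² e^{−2t}. -/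
/-!
With `b = e^{-t} a` and `r = ‖θ - b‖`, the translated profile is `g (log r)` for
`g u = e^{p u} v (t + u)`, `p = (4 - n) / 2`. From `r² = 1 - 2⟪θ, b⟫ + ‖b‖²` one gets
`log r = -⟪θ, b⟫ + O(‖b‖²)`, and `g'' = e^{p u} (p² v + 2 p v' + v'')` is bounded in terms of
`p` and `M`, so the second-order Taylor bound for `g` at `0` gives the estimate.
-/

open Real Set

theorem abs_sub_sub_mul_le_of_hasDerivAt {f f' f'' : ℝ → ℝ} {a x K : ℝ}
    (hf : ∀ y ∈ uIcc a x, HasDerivAt f (f' y) y)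
    (hf' : ∀ y ∈ uIcc a x, HasDerivAt f' (f'' y) y)
    (hK : ∀ y ∈ uIcc a x, |f'' y| ≤ K) :
    |f x - f a - (x - a) * f' a| ≤ K * (x - a) ^ 2 := by
  have hf'_near : ∀ y ∈ uIcc a x, |f' y - f' a| ≤ K * |x - a| := fun y hy => by
    have hK0 : 0 ≤ K := (abs_nonneg _).trans (hK a left_mem_uIcc)
    calc |f' y - f' a| ≤ K * |y - a| :=
          (convex_uIcc a x).norm_image_sub_le_of_norm_hasDerivWithin_le
            (fun z hz => (hf' z hz).hasDerivWithinAt) hK left_mem_uIcc hy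
      _ ≤ K * |x - a| := mul_le_mul_of_nonneg_left (abs_sub_left_of_mem_uIcc hy) hK0
  have h := (convex_uIcc a x).norm_image_sub_le_of_norm_hasDerivWithin_le
    (f := fun y => f y - y * f' a)
    (fun y hy => ((hf y hy).sub (hasDerivAt_mul_const (f' a))).hasDerivWithinAt)
    hf'_near left_mem_uIcc right_mem_uIcc
  calc |f x - f a - (x - a) * f' a| = |f x - x * f' a - (f a - a * f' a)| := by ring_nf
    _ ≤ K * |x - a| * |x - a| := h
    _ = K * (x - a) ^ 2 := by rw [mul_assoc, ← abs_mul, ← sq, abs_sq]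

theorem abs_log_sub_sub_one_le {r : ℝ} (hr : |r - 1| ≤ 1 / 2) :
    |log r - (r - 1)| ≤ 2 * (r - 1) ^ 2 := by
  have h := abs_log_sub_add_sum_range_le (x := 1 - r) (by rw [abs_sub_comm]; linarith) 1
  rw [abs_sub_comm] at h
  simp only [Finset.range_one, Finset.sum_singleton, zero_add, pow_one, Nat.cast_zero,
    div_one, sub_sub_cancel, zero_add] at h
  calc |log r - (r - 1)| = |1 - r + log r| := by ring_nf
    _ ≤ |r - 1| ^ 2 / (1 - |r - 1|) := h
    _ ≤ 2 * (r - 1) ^ 2 := by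
      rw [div_le_iff₀ (by linarith), sq_abs]
      nlinarith [sq_nonneg (r - 1)]

theorem abs_log_le_two_mul_abs_sub_one {r : ℝ} (hr : |r - 1| ≤ 1 / 2) :
    |log r| ≤ 2 * |r - 1| :=
  calc |log r| ≤ |log r - (r - 1)| + |r - 1| := by
        linarith [abs_sub_abs_le_abs_sub (log r) (r - 1)]
    _ ≤ 2 * |r - 1| ^ 2 + |r - 1| := by rw [sq_abs]; gcongr; exact abs_log_sub_sub_one_le hr
    _ ≤ 2 * |r - 1| := by nlinarith [abs_nonneg (r - 1)]

theorem abs_norm_sub_sub_one_le {F : Type*} [SeminormedAddCommGroup F] {θ b : F}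
    (hθ : ‖θ‖ = 1) : |‖θ - b‖ - 1| ≤ ‖b‖ := by
  simpa [hθ] using abs_norm_sub_norm_le (θ - b) θ

section InnerProductSpace

variable {E : Type*} [NormedAddCommGroup E] [InnerProductSpace ℝ E] {θ b : E}

theorem abs_log_norm_sub_add_inner_le (hθ : ‖θ‖ = 1) (hb : ‖b‖ ≤ 1 / 2) :
    |log ‖θ - b‖ + inner ℝ θ b| ≤ 4 * ‖b‖ ^ 2 := by
  set r := ‖θ - b‖
  set q := inner ℝ θ b
  have hr : |r - 1| ≤ ‖b‖ := abs_norm_sub_sub_one_le hθ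
  have hq : |q| ≤ ‖b‖ := by simpa [hθ] using abs_real_inner_le_norm θ b
  have hr_sq : r ^ 2 = 1 - 2 * q + ‖b‖ ^ 2 := by simpa [hθ] using norm_sub_sq_real θ b
  have hr_near : |r - 1 + q| ≤ 2 * ‖b‖ ^ 2 := by
    have hr0 : 0 ≤ r := norm_nonneg _
    have hprod : |(r + 1) * (r - 1 + q)| ≤ 2 * ‖b‖ ^ 2 := by
      rw [show (r + 1) * (r - 1 + q) = ‖b‖ ^ 2 + (r - 1) * q by linear_combination hr_sq]
      calc |‖b‖ ^ 2 + (r - 1) * q| ≤ ‖b‖ ^ 2 + |r - 1| * |q| := (abs_add_le _ _).trans_eq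
            (by rw [abs_of_nonneg (by positivity), abs_mul])
        _ ≤ 2 * ‖b‖ ^ 2 := by nlinarith [abs_nonneg (r - 1), abs_nonneg q]
    rw [abs_mul, abs_of_nonneg (by linarith)] at hprod
    nlinarith [abs_nonneg (r - 1 + q)]
  have hlog := abs_log_sub_sub_one_le (hr.trans hb)
  calc |log r + q| = |(log r - (r - 1)) + (r - 1 + q)| := by ring_nf
    _ ≤ |log r - (r - 1)| + |r - 1 + q| := abs_add_le _ _
    _ ≤ 2 * (r - 1) ^ 2 + 2 * ‖b‖ ^ 2 := add_le_add hlog hr_near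
    _ ≤ 4 * ‖b‖ ^ 2 := by rw [← sq_abs (r - 1)]; nlinarith [abs_nonneg (r - 1)]

end InnerProductSpace

section Profile

variable {v : ℝ → ℝ} {M : ℝ}

theorem abs_exp_mul_mul_comp_add_sub_le (hv : ContDiff ℝ 2 v) (hv0 : ∀ t, |v t| ≤ M)
    (hv1 : ∀ t, |deriv v t| ≤ M) (hv2 : ∀ t, |iteratedDeriv 2 v t| ≤ M) (p t : ℝ) {u : ℝ}
    (hu : |u| ≤ 1) :
    |exp (p * u) * v (t + u) - v t - u * (p * v t + deriv v t)| ≤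
      exp |p| * M * (|p| + 1) ^ 2 * u ^ 2 := by
  have hv' : ∀ x, HasDerivAt v (deriv v x) x := fun x =>
    ((hv.differentiable (by norm_num)) x).hasDerivAt
  have hv'' : ∀ x, HasDerivAt (deriv v) (iteratedDeriv 2 v x) x := fun x => by
    have hdv : Differentiable ℝ (deriv v) := by
      simpa using hv.differentiable_iteratedDeriv 1 (by norm_num)
    rw [iteratedDeriv_succ, iteratedDeriv_one]
    exact (hdv x).hasDerivAt
  have hexp : ∀ x, HasDerivAt (fun w => exp (p * w)) (exp (p * x) * p) x := fun x => by
    simpa using ((hasDerivAt_id x).const_mul p).exp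
  have hg' : ∀ x, HasDerivAt (fun w => exp (p * w) * v (t + w))
      (exp (p * x) * (p * v (t + x) + deriv v (t + x))) x := fun x =>
    ((hexp x).mul ((hv' _).comp_const_add t x)).congr_deriv (by ring)
  have hg'' : ∀ x, HasDerivAt (fun w => exp (p * w) * (p * v (t + w) + deriv v (t + w)))
      (exp (p * x) * (p ^ 2 * v (t + x) + 2 * p * deriv v (t + x) + iteratedDeriv 2 v (t + x)))
      x := fun x =>
    ((hexp x).mul ((((hv' _).comp_const_add t x).const_mul p).add
      ((hv'' _).comp_const_add t x))).congr_deriv (by simp only [Pi.add_apply]; ring)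
  have hbound : ∀ y ∈ uIcc 0 u, |exp (p * y) *
      (p ^ 2 * v (t + y) + 2 * p * deriv v (t + y) + iteratedDeriv 2 v (t + y))| ≤
      exp |p| * M * (|p| + 1) ^ 2 := fun y hy => by
    have hy : |y| ≤ 1 := by simpa using (abs_sub_left_of_mem_uIcc hy).trans (by simpa using hu)
    have hexp_le : exp (p * y) ≤ exp |p| :=
      exp_le_exp.mpr ((le_abs_self _).trans
        (by rw [abs_mul]; nlinarith [abs_nonneg p, abs_nonneg y]))
    have hsum : |p ^ 2 * v (t + y) + 2 * p * deriv v (t + y) + iteratedDeriv 2 v (t + y)| ≤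
        M * (|p| + 1) ^ 2 := by
      have := abs_add_three (p ^ 2 * v (t + y)) (2 * p * deriv v (t + y))
        (iteratedDeriv 2 v (t + y))
      simp only [abs_mul, abs_pow, abs_two] at this
      nlinarith [hv0 (t + y), hv1 (t + y), hv2 (t + y), abs_nonneg p, sq_nonneg |p|]
    rw [abs_mul, abs_of_pos (exp_pos _)]
    calc _ ≤ exp |p| * (M * (|p| + 1) ^ 2) := mul_le_mul hexp_le hsum (abs_nonneg _) (exp_pos _).le
      _ = _ := by ring
  simpa using abs_sub_sub_mul_le_of_hasDerivAt (a := 0) (x := u) (fun x _ => hg' x)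
    (fun x _ => hg'' x) hbound

variable {E : Type*} [NormedAddCommGroup E] [InnerProductSpace ℝ E]

theorem abs_norm_sub_rpow_mul_comp_add_log_sub_le (hv : ContDiff ℝ 2 v) (hv0 : ∀ t, |v t| ≤ M)
    (hv1 : ∀ t, |deriv v t| ≤ M) (hv2 : ∀ t, |iteratedDeriv 2 v t| ≤ M) (p t : ℝ) {θ b : E}
    (hθ : ‖θ‖ = 1) (hb : ‖b‖ ≤ 1 / 2) :
    |‖θ - b‖ ^ p * v (t + log ‖θ - b‖) - v t + inner ℝ θ b * (p * v t + deriv v t)| ≤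
      8 * (exp |p| * M * (|p| + 1) ^ 2) * ‖b‖ ^ 2 := by
  set K := exp |p| * M * (|p| + 1) ^ 2
  set L := log ‖θ - b‖
  set D := p * v t + deriv v t
  have hr : |‖θ - b‖ - 1| ≤ ‖b‖ := abs_norm_sub_sub_one_le hθ
  have hL : |L| ≤ 2 * ‖b‖ := (abs_log_le_two_mul_abs_sub_one (hr.trans hb)).trans (by linarith)
  have hrpow : ‖θ - b‖ ^ p = exp (p * L) := by
    rw [rpow_def_of_pos (by linarith [(abs_le.mp hr).1]), mul_comm]
  have hM : 0 ≤ M := (abs_nonneg _).trans (hv0 0)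
  have hD : |D| ≤ K := by
    calc |D| ≤ |p| * |v t| + |deriv v t| := (abs_add_le _ _).trans_eq (by rw [abs_mul])
      _ ≤ 1 * M * (|p| + 1) ^ 2 := by
          nlinarith [hv0 t, hv1 t, abs_nonneg p, mul_nonneg hM (abs_nonneg p)]
      _ ≤ K := mul_le_mul_of_nonneg_right
          (mul_le_mul_of_nonneg_right (one_le_exp (abs_nonneg p)) hM) (sq_nonneg _)
  have htaylor := abs_exp_mul_mul_comp_add_sub_le hv hv0 hv1 hv2 p t (u := L) (by linarith)
  have hlog := abs_log_norm_sub_add_inner_le hθ hb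
  calc |‖θ - b‖ ^ p * v (t + L) - v t + inner ℝ θ b * D|
      = |(exp (p * L) * v (t + L) - v t - L * D) + (L + inner ℝ θ b) * D| := by
        rw [hrpow]; ring_nf
    _ ≤ K * L ^ 2 + 4 * ‖b‖ ^ 2 * K := (abs_add_le _ _).trans (add_le_add htaylor
        (by rw [abs_mul]; exact mul_le_mul hlog hD (abs_nonneg _) (by positivity)))
    _ ≤ 8 * K * ‖b‖ ^ 2 := by
        have hL2 : L ^ 2 ≤ 4 * ‖b‖ ^ 2 := by nlinarith [sq_abs L, abs_nonneg L]
        nlinarith [mul_le_mul_of_nonneg_left hL2 (by positivity : 0 ≤ K)]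

end Profile

theorem stmt_17_general (n : ℕ) (M : ℝ) (hM : 0 < M) :
    ∃ C : ℝ, 0 < C ∧
      ∀ v : ℝ → ℝ, ContDiff ℝ 2 v →
        (∀ t : ℝ, |v t| ≤ M) → (∀ t : ℝ, |deriv v t| ≤ M) →
        (∀ t : ℝ, |iteratedDeriv 2 v t| ≤ M) →
        ∀ (t : ℝ) (θ a : EuclideanSpace ℝ (Fin n)),
          ‖θ‖ = 1 → θ ≠ Real.exp (-t) • a → Real.exp (-t) * ‖a‖ ≤ 1 / 2 →
          |‖θ - Real.exp (-t) • a‖ ^ (((4 : ℝ) - n) / 2) *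
              v (t + Real.log ‖θ - Real.exp (-t) • a‖) -
            v t -
            Real.exp (-t) * (inner ℝ θ a : ℝ) *
              (((n : ℝ) - 4) / 2 * v t - deriv v t)| ≤
          C * ‖a‖ ^ 2 * Real.exp (-2 * t) := by
  set p : ℝ := ((4 : ℝ) - n) / 2 with hp
  refine ⟨8 * (exp |p| * M * (|p| + 1) ^ 2), by positivity, ?_⟩
  intro v hv hv0 hv1 hv2 t θ a hθ _ hsmall
  have hb : ‖exp (-t) • a‖ = exp (-t) * ‖a‖ := by rw [norm_smul, norm_of_nonneg (exp_pos _).le]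
  refine (le_of_eq ?_).trans ((abs_norm_sub_rpow_mul_comp_add_log_sub_le hv hv0 hv1 hv2 p t hθ
    (hb.trans_le hsmall)).trans_eq ?_)
  · rw [real_inner_smul_right, hp]
    ring_nf
  · rw [hb, mul_pow, ← exp_nat_mul]
    ring_nf

/-- first-order Taylor expansion, with quadratic error, of the translated
Emden–Fowler profile `v_a(t,θ) = |θ − e^{−t}a|^{(4−n)/2} v(t + log|θ − e^{−t}a|)`:
there is a constant `C > 0` depending only on `n` and `M` such that
`|v_a(t,θ) − v(t) − e^{−t}⟨θ,a⟩(((n−4)/2)v(t) − v′(t))| ≤ C|a|²e^{−2t}`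
whenever `e^{−t}|a| ≤ 1/2`, for any `C²` function `v` with `|v|, |v′|, |v″| ≤ M`. -/
theorem stmt_17 (n : ℕ) (hn : 5 ≤ n) (M : ℝ) (hM : 0 < M) :
    ∃ C : ℝ, 0 < C ∧
      ∀ v : ℝ → ℝ, ContDiff ℝ 2 v →
        (∀ t : ℝ, |v t| ≤ M) → (∀ t : ℝ, |deriv v t| ≤ M) →
        (∀ t : ℝ, |iteratedDeriv 2 v t| ≤ M) →
        ∀ (t : ℝ) (θ a : EuclideanSpace ℝ (Fin n)),
          ‖θ‖ = 1 → θ ≠ Real.exp (-t) • a → Real.exp (-t) * ‖a‖ ≤ 1 / 2 →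
          |‖θ - Real.exp (-t) • a‖ ^ (((4 : ℝ) - n) / 2) *
              v (t + Real.log ‖θ - Real.exp (-t) • a‖) -
            v t -
            Real.exp (-t) * (inner ℝ θ a : ℝ) *
              (((n : ℝ) - 4) / 2 * v t - deriv v t)| ≤
          C * ‖a‖ ^ 2 * Real.exp (-2 * t) :=
  stmt_17_general n M hM
end
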